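/- arXiv:0912.2236 — 10 statements merged into one kernel-verified Lean document; each statement's English description precedes it below -/
import Mathlib

section
/- Let q = 2h+2 with h ≥ 1 an integer. For every integer a_0, every n ≥ 0 and all nonzero integers a_1, …, a_n, the two points of ℝ ∪ {∞} given by T^{a_0} S T^{a_1} S T^{a_2} ⋯ S T^{a_n} (S T)^{h} · 0 and T^{a_0} S T^{a_1} ⋯ S T^{a_n − 1} (S T^{−1})^{h} · 0 coincide; equivalently, the SL(2,ℝ) matrices T^{a_0} S T^{a_1} ⋯ S T^{a_n} (S T)^{h} and T^{a_0} S T^{a_1} ⋯ S T^{a_n − 1} (S T^{−1})^{h} have proportional second columns (so they send the projective point [0 : 1] to the same point). In the language of λ_q-continued fractions this says [a_0; a_1, …, a_n, 1^{h}] = [a_0; a_1, …, a_n − 1, (−1)^{h}]. -/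
/-!
Write `P = S T` and `λ = λ_q`. Since `P² = λ P - 1`, the powers of `P` are
`Pⁿ = S_{n-1}(λ) P - S_{n-2}(λ)` with the rescaled Chebyshev polynomials `S_n`, and
`S_n(2 cos θ) sin θ = sin((n+1)θ)` at `θ = π/q` gives `P^q = -1`.

Because `P T⁻¹ (S T⁻¹) = S² T⁻¹ = -T⁻¹`, we get `P^k T⁻¹ (S T⁻¹)^k = (-1)^k T⁻¹` for all `k`.
Combined with `P^{2h+2} = -1` this gives `(S T)^h = (-1)^h T⁻¹ (S T⁻¹)^h L` with
`L = [[1, 0], [λ, 1]]`, and right multiplication by `L` does not change second columns.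
Lowering `a_n` by one multiplies the word on the right by `T⁻¹`.
-/

/-- `λ_q = 2 cos (π / q)`. -/
noncomputable def lam (q : ℕ) : ℝ := 2 * Real.cos (Real.pi / (q : ℝ))

/-- The matrix `S = [[0,-1],[1,0]]`. -/
def Smat : Matrix (Fin 2) (Fin 2) ℝ := !![0, -1; 1, 0]

/-- The matrix `T^a = [[1, a·λ_q],[0,1]]`. -/
noncomputable def Tmat (q : ℕ) (a : ℤ) : Matrix (Fin 2) (Fin 2) ℝ :=
  !![1, (a : ℝ) * lam q; 0, 1]

/-- The word `T^{a_0} S T^{a_1} ⋯ S T^{a_n}`, where `a : Fin (n+1) → ℤ`. -/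
noncomputable def cfWord (q : ℕ) {n : ℕ} (a : Fin (n + 1) → ℤ) :
    Matrix (Fin 2) (Fin 2) ℝ :=
  Tmat q (a 0) * (List.ofFn (fun i : Fin n => Smat * Tmat q (a i.succ))).prod

open Polynomial.Chebyshev

theorem pow_eq_chebyshevS_smul_sub {R A : Type*} [CommRing R] [Ring A] [Algebra R A] {M : A}
    {t : R} (hM : M ^ 2 = t • M - 1) (n : ℕ) :
    M ^ n = (S R (n - 1)).eval t • M - (S R (n - 2)).eval t • 1 := by
  induction n with
  | zero => simp [S_neg_one, S_neg_two]
  | succ n ih =>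
    have hrec : (S R n).eval t = t * (S R (n - 1)).eval t - (S R (n - 2)).eval t := by
      simp [S_eq R (n : ℤ)]
    have e1 : ((n + 1 : ℕ) : ℤ) - 1 = n := by push_cast; ring
    have e2 : ((n + 1 : ℕ) : ℤ) - 2 = n - 1 := by push_cast; ring
    rw [pow_succ, ih, sub_mul, smul_mul_assoc, smul_mul_assoc, ← sq, hM, one_mul, e1, e2, hrec]
    module

theorem pow_mul_mul_pow_of_mul_mul_eq_smul {R A : Type*} [CommSemiring R] [Semiring A]
    [Algebra R A] {P X Q : A} {c : R} (h : P * X * Q = c • X) (k : ℕ) :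
    P ^ k * X * Q ^ k = c ^ k • X := by
  induction k with
  | zero => simp
  | succ k ih =>
    calc P ^ (k + 1) * X * Q ^ (k + 1) = P ^ k * (P * X * Q) * Q ^ k := by
          rw [pow_succ P, pow_succ' Q]; simp only [mul_assoc]
      _ = c ^ (k + 1) • X := by
          rw [h, mul_smul_comm, smul_mul_assoc, ih, smul_smul, pow_succ']

lemma mul_lowerUnitriangular_apply_one {R : Type*} [Semiring R] (M : Matrix (Fin 2) (Fin 2) R)
    (x : R) (i : Fin 2) : (M * !![1, 0; x, 1]) i 1 = M i 1 := by
  simp [Matrix.mul_apply, Fin.sum_univ_two]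

lemma Tmat_zero (q : ℕ) : Tmat q 0 = 1 := by
  simp [Tmat, Matrix.one_fin_two]

lemma Tmat_mul_Tmat (q : ℕ) (x y : ℤ) : Tmat q x * Tmat q y = Tmat q (x + y) := by
  ext i j
  fin_cases i <;> fin_cases j <;> simp [Tmat, Matrix.mul_apply, Fin.sum_univ_two]; ring

lemma Smat_mul_Smat : Smat * Smat = -1 := by
  ext i j
  fin_cases i <;> fin_cases j <;> simp [Smat, Matrix.mul_apply, Fin.sum_univ_two]

lemma Smat_mul_Tmat_one_sq (q : ℕ) : (Smat * Tmat q 1) ^ 2 = lam q • (Smat * Tmat q 1) - 1 := by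
  ext i j
  fin_cases i <;> fin_cases j <;> simp [sq, Smat, Tmat, Matrix.mul_apply, Fin.sum_univ_two]; ring

lemma chebyshevS_eval_lam (q : ℕ) (hq : 2 ≤ q) :
    (S ℝ (q - 1)).eval (lam q) = 0 ∧ (S ℝ (q - 2)).eval (lam q) = 1 := by
  set θ := Real.pi / q with hθ
  have hsin : Real.sin θ ≠ 0 := by
    have : (1 : ℝ) < q := by exact_mod_cast hq
    exact (Real.sin_pos_of_pos_of_lt_pi (by positivity) (div_lt_self Real.pi_pos this)).ne'
  have hqθ : (q : ℝ) * θ = Real.pi := by rw [hθ]; field_simp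
  have h1 := S_two_mul_real_cos θ (q - 1)
  have h2 := S_two_mul_real_cos θ (q - 2)
  push_cast at h1 h2
  rw [sub_add_cancel, hqθ, Real.sin_pi] at h1
  rw [show ((q : ℝ) - 2 + 1) * θ = Real.pi - θ by linear_combination hqθ, Real.sin_pi_sub] at h2
  exact ⟨(mul_eq_zero.1 h1).resolve_right hsin, (mul_eq_right₀ hsin).1 h2⟩

lemma Smat_mul_Tmat_one_pow_self (q : ℕ) (hq : 2 ≤ q) : (Smat * Tmat q 1) ^ q = -1 := by
  obtain ⟨h1, h2⟩ := chebyshevS_eval_lam q hq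
  rw [pow_eq_chebyshevS_smul_sub (Smat_mul_Tmat_one_sq q), h1, h2, zero_smul, one_smul, zero_sub]

lemma Smat_mul_Tmat_pow_mul_Tmat_neg_one_mul_pow (q k : ℕ) :
    (Smat * Tmat q 1) ^ k * Tmat q (-1) * (Smat * Tmat q (-1)) ^ k =
      (-1 : ℝ) ^ k • Tmat q (-1) := by
  refine pow_mul_mul_pow_of_mul_mul_eq_smul ?_ k
  rw [mul_assoc Smat, Tmat_mul_Tmat, add_neg_cancel, Tmat_zero, mul_one, ← mul_assoc,
    Smat_mul_Smat, neg_one_smul, neg_one_mul]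

lemma Smat_mul_Tmat_one_sq_mul_Tmat_neg_one_mul (q : ℕ) :
    (Smat * Tmat q 1) ^ 2 * Tmat q (-1) * !![1, 0; lam q, 1] = -1 := by
  ext i j
  fin_cases i <;> fin_cases j <;> simp [sq, Smat, Tmat, Matrix.mul_apply, Fin.sum_univ_two]

lemma Smat_mul_Tmat_one_pow_eq_of_pow_eq_neg_one (q h : ℕ)
    (hP : (Smat * Tmat q 1) ^ (2 * h + 2) = -1) :
    (Smat * Tmat q 1) ^ h =
      (-1 : ℝ) ^ h • (Tmat q (-1) * (Smat * Tmat q (-1)) ^ h * !![1, 0; lam q, 1]) := by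
  set P := Smat * Tmat q 1
  set X := (-1 : ℝ) ^ h • (Tmat q (-1) * (Smat * Tmat q (-1)) ^ h * !![1, 0; lam q, 1])
  have hX : P ^ (h + 2) * X = -1 := by
    calc P ^ (h + 2) * X = (-1 : ℝ) ^ h • (P ^ 2 * (P ^ h * Tmat q (-1) * (Smat * Tmat q (-1)) ^ h)
          * !![1, 0; lam q, 1]) := by
          rw [add_comm h 2, pow_add]; simp only [X, mul_smul_comm, mul_assoc]
      _ = -1 := by
        rw [Smat_mul_Tmat_pow_mul_Tmat_neg_one_mul_pow, mul_smul_comm, smul_mul_assoc, smul_smul,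
          ← mul_pow, neg_one_mul, neg_neg, one_pow, one_smul,
          Smat_mul_Tmat_one_sq_mul_Tmat_neg_one_mul]
  calc P ^ h = -(P ^ h * (P ^ (h + 2) * X)) := by rw [hX, mul_neg_one, neg_neg]
    _ = X := by rw [← mul_assoc, ← pow_add, show h + (h + 2) = 2 * h + 2 by ring, hP,
      neg_one_mul, neg_neg]

lemma cfWord_succ (q : ℕ) {n : ℕ} (a : Fin (n + 2) → ℤ) :
    cfWord q a = cfWord q (fun i : Fin (n + 1) => a i.castSucc) *
      (Smat * Tmat q (a (Fin.last (n + 1)))) := by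
  simp only [cfWord, List.ofFn_succ', List.concat_eq_append, List.prod_append, List.prod_cons,
    List.prod_nil, mul_one, Fin.succ_last, mul_assoc]
  rfl

lemma cfWord_update_last (q : ℕ) {n : ℕ} (a : Fin (n + 1) → ℤ) (x : ℤ) :
    cfWord q (Function.update a (Fin.last n) (a (Fin.last n) + x)) = cfWord q a * Tmat q x := by
  cases n with
  | zero => simp [cfWord, Fin.last_zero, Tmat_mul_Tmat]
  | succ n =>
    rw [cfWord_succ, cfWord_succ, Function.update_self, mul_assoc, mul_assoc,
      Tmat_mul_Tmat]
    congr 2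
    funext i
    exact Function.update_of_ne (Fin.castSucc_lt_last i).ne _ _

theorem stmt0_general (h q : ℕ) (hq : q = 2 * h + 2) (n : ℕ)
    (a : Fin (n + 1) → ℤ) :
    ∃ c : ℝ, c ≠ 0 ∧
      (cfWord q a * (Smat * Tmat q 1) ^ h) 0 1 =
        c * (cfWord q (Function.update a (Fin.last n) (a (Fin.last n) - 1)) *
          (Smat * Tmat q (-1)) ^ h) 0 1 ∧
      (cfWord q a * (Smat * Tmat q 1) ^ h) 1 1 =
        c * (cfWord q (Function.update a (Fin.last n) (a (Fin.last n) - 1)) *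
          (Smat * Tmat q (-1)) ^ h) 1 1 := by
  have hpow : (Smat * Tmat q 1) ^ h =
      (-1 : ℝ) ^ h • (Tmat q (-1) * (Smat * Tmat q (-1)) ^ h * !![1, 0; lam q, 1]) :=
    Smat_mul_Tmat_one_pow_eq_of_pow_eq_neg_one q h
      (hq ▸ Smat_mul_Tmat_one_pow_self q (by omega))
  have hcol (i : Fin 2) : (cfWord q a * (Smat * Tmat q 1) ^ h) i 1 = (-1) ^ h *
      (cfWord q (Function.update a (Fin.last n) (a (Fin.last n) - 1)) *
        (Smat * Tmat q (-1)) ^ h) i 1 := by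
    rw [hpow, sub_eq_add_neg, cfWord_update_last, Matrix.mul_smul, Matrix.smul_apply,
      ← mul_assoc, ← mul_assoc, mul_lowerUnitriangular_apply_one, smul_eq_mul]
  exact ⟨(-1) ^ h, by simp, hcol 0, hcol 1⟩

/-- for `q = 2h+2`, the matrices
`T^{a_0} S T^{a_1} ⋯ S T^{a_n} (S T)^h` and
`T^{a_0} S T^{a_1} ⋯ S T^{a_n - 1} (S T^{-1})^h`
have proportional second columns, i.e.
`[a_0; a_1, …, a_n, 1^h] = [a_0; a_1, …, a_n - 1, (-1)^h]`. -/
theorem stmt0 (h q : ℕ) (hh : 1 ≤ h) (hq : q = 2 * h + 2) (n : ℕ)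
    (a : Fin (n + 1) → ℤ) (ha : ∀ i : Fin (n + 1), i ≠ 0 → a i ≠ 0) :
    ∃ c : ℝ, c ≠ 0 ∧
      (cfWord q a * (Smat * Tmat q 1) ^ h) 0 1 =
        c * (cfWord q (Function.update a (Fin.last n) (a (Fin.last n) - 1)) *
          (Smat * Tmat q (-1)) ^ h) 0 1 ∧
      (cfWord q a * (Smat * Tmat q 1) ^ h) 1 1 =
        c * (cfWord q (Function.update a (Fin.last n) (a (Fin.last n) - 1)) *
          (Smat * Tmat q (-1)) ^ h) 1 1 :=
  stmt0_general h q hq n a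
end

section
/- Let q ≥ 3 be an integer and λ_q = 2 cos(π/q). If q = 2h+2 is even, then (S T)^{h} · 0 = −λ_q/2; if q = 2h+3 is odd, then (S T)^{h} (S T^{2}) (S T)^{h} · 0 = −λ_q/2. (These are the regular λ_q-continued fraction expansions −λ_q/2 = [0; 1^{h}] for even q and −λ_q/2 = [0; 1^{h}, 2, 1^{h}] for odd q.) -/
/-!
Put `θ = π / q`, so `λ_q = 2 cos θ`, and `r a = sinRatio θ a = -sin a / sin (a + θ)`. The
addition formula `sin (a + 2θ) = 2 cos θ sin (a + θ) - sin a` says that `ST` maps `r a` to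
`r (a + θ)`, so `ST` moves along the orbit `r (a + kθ)` as long as the sines stay positive. The
even case is the walk from `r 0 = 0` to `r (π/2 - θ) = -cos θ`. In the odd case the first walk
ends at `r b` with `2b + 3θ = π`, where `T · r b = 1 = r (-θ/2)`; the middle `ST²` is the `ST`
step out of this point, and a second walk reaches `r (π/2 - θ)` again.
-/

open Real

noncomputable def sinRatio (θ a : ℝ) : ℝ := -sin a / sin (a + θ)

theorem sinRatio_zero (θ : ℝ) : sinRatio θ 0 = 0 := by
  simp [sinRatio]

theorem sinRatio_neg_half (θ : ℝ) (h : sin (θ / 2) ≠ 0) : sinRatio θ (-(θ / 2)) = 1 := by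
  rw [sinRatio, sin_neg, neg_neg, show -(θ / 2) + θ = θ / 2 by ring, div_self h]

theorem sinRatio_pi_div_two_sub (θ : ℝ) : sinRatio θ (π / 2 - θ) = -cos θ := by
  rw [sinRatio, sin_pi_div_two_sub, sub_add_cancel, sin_pi_div_two, div_one]

theorem sinRatio_add_two_cos (θ a : ℝ) (h : sin (a + θ) ≠ 0) :
    sinRatio θ a + 2 * cos θ = sin (a + 2 * θ) / sin (a + θ) := by
  have hsin : sin (a + 2 * θ) = 2 * cos θ * sin (a + θ) - sin a := by
    rw [show a + 2 * θ = a + θ + θ by ring, sin_add, sin_add, cos_add]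
    linear_combination (-sin a) * sin_sq_add_cos_sq θ
  rw [sinRatio, hsin]
  field_simp
  ring

theorem neg_inv_sinRatio_add_two_cos (θ a : ℝ) (h : sin (a + θ) ≠ 0) :
    -1 / (sinRatio θ a + 2 * cos θ) = sinRatio θ (a + θ) := by
  rw [sinRatio_add_two_cos θ a h, sinRatio, add_assoc, ← two_mul, div_div_eq_mul_div,
    neg_one_mul]

theorem sinRatio_add_two_cos_eq_one (θ b : ℝ) (hb : 2 * b + 3 * θ = π)
    (h : sin (b + θ) ≠ 0) :
    sinRatio θ b + 2 * cos θ = 1 := by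
  rw [sinRatio_add_two_cos θ b h, show b + 2 * θ = π - (b + θ) by linarith, sin_pi_sub,
    div_self h]

theorem iterate_neg_inv_sinRatio (θ : ℝ) (hθ : 0 < θ) (k : ℕ) (a : ℝ) (ha : -θ < a)
    (hk : a + k * θ < π) :
    (fun x : ℝ => -1 / (x + 2 * cos θ))^[k] (sinRatio θ a) = sinRatio θ (a + k * θ) := by
  induction k generalizing a with
  | zero => simp
  | succ k ih =>
    push_cast at hk ⊢
    have hstep : sin (a + θ) ≠ 0 := (sin_pos_of_pos_of_lt_pi (by linarith) (by nlinarith)).ne'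
    rw [Function.iterate_succ_apply, neg_inv_sinRatio_add_two_cos θ a hstep,
      ih (a + θ) (by linarith) (by linarith)]
    ring_nf

theorem even_expansion_neg_half_lam (h : ℕ) :
    (fun x : ℝ => -1 / (x + lam (2 * h + 2)))^[h] 0 = -(lam (2 * h + 2)) / 2 := by
  set θ := π / ((2 * h + 2 : ℕ) : ℝ) with hθ_eq
  have hθ : θ * (2 * h + 2) = π := by rw [hθ_eq]; push_cast; field_simp
  have hθ_pos : 0 < θ := by positivity
  rw [show lam (2 * h + 2) = 2 * cos θ from rfl, ← sinRatio_zero θ,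
    iterate_neg_inv_sinRatio θ hθ_pos h 0 (by linarith) (by nlinarith [pi_pos]),
    show 0 + h * θ = π / 2 - θ by linarith, sinRatio_pi_div_two_sub]
  ring

theorem odd_expansion_neg_half_lam (h : ℕ) :
    (fun x : ℝ => -1 / (x + lam (2 * h + 3)))^[h]
      ((fun x : ℝ => -1 / (x + 2 * lam (2 * h + 3)))
        ((fun x : ℝ => -1 / (x + lam (2 * h + 3)))^[h] 0)) = -(lam (2 * h + 3)) / 2 := by
  set θ := π / ((2 * h + 3 : ℕ) : ℝ) with hθ_eq
  have hθ : θ * (2 * h + 3) = π := by rw [hθ_eq]; push_cast; field_simp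
  have hθ_pos : 0 < θ := by positivity
  have hθ_le : 3 * θ ≤ π := by nlinarith [h.cast_nonneg (α := ℝ)]
  set f := fun x : ℝ => -1 / (x + 2 * cos θ)
  have hfirst : f^[h] 0 + 2 * cos θ = 1 := by
    rw [← sinRatio_zero θ, iterate_neg_inv_sinRatio θ hθ_pos h 0 (by linarith) (by nlinarith)]
    exact sinRatio_add_two_cos_eq_one θ _ (by linarith)
      (sin_pos_of_pos_of_lt_pi (by positivity) (by nlinarith)).ne'
  have hmiddle : f^[h] 0 + 2 * (2 * cos θ) = sinRatio θ (-(θ / 2)) + 2 * cos θ := by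
    rw [sinRatio_neg_half θ (sin_pos_of_pos_of_lt_pi (by positivity) (by linarith)).ne']
    linarith
  change f^[h] (-1 / (f^[h] 0 + 2 * (2 * cos θ))) = -(2 * cos θ) / 2
  rw [hmiddle]
  change f^[h] (f (sinRatio θ (-(θ / 2)))) = _
  rw [← Function.iterate_succ_apply,
    iterate_neg_inv_sinRatio θ hθ_pos (h + 1) _ (by linarith) (by push_cast; nlinarith),
    show -(θ / 2) + ((h + 1 : ℕ) : ℝ) * θ = π / 2 - θ by push_cast; linarith,
    sinRatio_pi_div_two_sub]
  ring

theorem stmt2_general (q h : ℕ) :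
    (q = 2 * h + 2 →
      (fun x : ℝ => -1 / (x + lam q))^[h] 0 = -(lam q) / 2) ∧
    (q = 2 * h + 3 →
      (fun x : ℝ => -1 / (x + lam q))^[h]
        ((fun x : ℝ => -1 / (x + 2 * lam q))
          ((fun x : ℝ => -1 / (x + lam q))^[h] 0)) = -(lam q) / 2) := by
  constructor
  · rintro rfl
    exact even_expansion_neg_half_lam h
  · rintro rfl
    exact odd_expansion_neg_half_lam h

/-- for even `q = 2h+2`, `(ST)^h · 0 = -λ_q/2`; for odd `q = 2h+3`,
`(ST)^h (ST²) (ST)^h · 0 = -λ_q/2`, where `ST · x = -1/(x+λ_q)` and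
`ST² · x = -1/(x+2λ_q)`. -/
theorem stmt2 (q h : ℕ) (hq : 3 ≤ q) :
    (q = 2 * h + 2 →
      (fun x : ℝ => -1 / (x + lam q))^[h] 0 = -(lam q) / 2) ∧
    (q = 2 * h + 3 →
      (fun x : ℝ => -1 / (x + lam q))^[h]
        ((fun x : ℝ => -1 / (x + 2 * lam q))
          ((fun x : ℝ => -1 / (x + lam q))^[h] 0)) = -(lam q) / 2) :=
  stmt2_general q h
end

section
/- Let q = 2h+3 with h ≥ 0 an integer, λ_q = 2 cos(π/q), and let R_q = (λ_q − 2 + √((2 − λ_q)² + 4))/2 be the unique positive real root of R² + (2 − λ_q) R = 1. Then the Möbius transformation (T S)^{h+1} maps R_q to −R_q, i.e. (T S)^{h+1} · R_q = −R_q, and moreover λ_q/2 < R_q ≤ 1. -/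
/-!
Write `θ = π / q`, so that `λ_q = 2 cos θ`, and put `g k = sinSeq θ R k = R sin kθ - sin (k - 1)θ`. Then `g 1 / g 0 = R`
and `g` satisfies the recurrence `g (k + 2) = λ_q g (k + 1) - g k` of the matrix `TS`, so
`(TS)^k · R = g (k + 1) / g k` as long as `g 1, …, g k` do not vanish. For `k ≤ h + 1` they are positive,
because `R > λ_q - 1` and `sin kθ` increases up to the middle of `[0, π]`. Finally `qθ = π` gives
`sin (h + 2)θ = sin (h + 1)θ`, which turns `g (h + 2) = -R g (h + 1)` into `R² + (2 - λ_q) R = 1`.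
-/

open Real

lemma sin_add_add_sin_sub (x y : ℝ) : sin (x + y) + sin (x - y) = 2 * cos y * sin x := by
  rw [sin_add, sin_sub]; ring

lemma sin_le_sin_of_le_of_le_pi_sub {a b : ℝ} (ha : 0 ≤ a) (hab : a ≤ b) (hb : b ≤ π - a) :
    sin a ≤ sin b := by
  rw [← sub_nonneg, sin_sub_sin]
  have h₁ : 0 ≤ sin ((b - a) / 2) := sin_nonneg_of_nonneg_of_le_pi (by linarith) (by linarith)
  have h₂ : 0 ≤ cos ((b + a) / 2) := cos_nonneg_of_mem_Icc ⟨by linarith [pi_pos], by linarith⟩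
  positivity

lemma lam_lt_two {q : ℕ} (hq : 0 < q) : lam q < 2 := by
  have hcos : cos (π / q) < 1 := by
    rw [← cos_zero]
    exact cos_lt_cos_of_nonneg_of_le_pi le_rfl
      (div_le_self pi_pos.le (by exact_mod_cast hq)) (by positivity)
  unfold lam
  linarith

section Quadratic

variable {L R : ℝ}

lemma sq_add_mul_eq_one_and_pos_of_eq (hR : R = (L - 2 + √((2 - L) ^ 2 + 4)) / 2) :
    R ^ 2 + (2 - L) * R = 1 ∧ 0 < R := by
  have hsq := sq_sqrt (show 0 ≤ (2 - L) ^ 2 + 4 by positivity)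
  have hlt : 2 - L < √((2 - L) ^ 2 + 4) := lt_sqrt_of_sq_lt (by linarith)
  subst hR
  exact ⟨by linear_combination hsq / 4, by linarith⟩

lemma half_lt_of_sq_add_mul_eq_one (hL : L < 2) (hR : 0 < R) (hQ : R ^ 2 + (2 - L) * R = 1) :
    L / 2 < R := by
  nlinarith

lemma le_one_of_sq_add_mul_eq_one (hL : L ≤ 2) (hQ : R ^ 2 + (2 - L) * R = 1) : R ≤ 1 := by
  nlinarith

end Quadratic

lemma iterate_neg_one_div_add_div {L : ℝ} {g : ℕ → ℝ} (hg : ∀ k, g (k + 2) = L * g (k + 1) - g k)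
    {n : ℕ} (hne : ∀ k, 0 < k → k ≤ n → g k ≠ 0) :
    (fun x : ℝ => -1 / x + L)^[n] (g 1 / g 0) = g (n + 1) / g n := by
  induction n with
  | zero => rfl
  | succ n ih =>
    have hg₁ : g (n + 1) ≠ 0 := hne (n + 1) n.succ_pos le_rfl
    rw [Function.iterate_succ_apply', ih fun k hk₀ hk => hne k hk₀ (by omega), hg,
      neg_div, one_div_div, eq_div_iff hg₁, add_mul, neg_mul, div_mul_cancel₀ _ hg₁]
    ring

section SinSeq

variable (θ R : ℝ) {h : ℕ}

noncomputable def sinSeq (k : ℕ) : ℝ := R * sin (k * θ) - sin ((k - 1) * θ)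

lemma sinSeq_one_div_zero (hθ : sin θ ≠ 0) : sinSeq θ R 1 / sinSeq θ R 0 = R := by
  simp [sinSeq, hθ]

lemma sinSeq_add_two (k : ℕ) :
    sinSeq θ R (k + 2) = 2 * cos θ * sinSeq θ R (k + 1) - sinSeq θ R k := by
  have h₁ := sin_add_add_sin_sub ((k + 1) * θ) θ
  have h₂ := sin_add_add_sin_sub (k * θ) θ
  simp only [sinSeq]
  push_cast
  ring_nf at h₁ h₂ ⊢
  linear_combination R * h₁ - h₂

lemma sinSeq_pos (hθ : (2 * h + 3) * θ = π) (hR : 2 * cos θ - 1 < R) {k : ℕ} (hk₀ : 0 < k)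
    (hk : k ≤ h + 1) : 0 < sinSeq θ R k := by
  obtain ⟨m, rfl⟩ : ∃ m, k = m + 1 := ⟨k - 1, by omega⟩
  have hm : (m : ℝ) ≤ h := by exact_mod_cast (by omega : m ≤ h)
  have hm₀ : (0 : ℝ) ≤ m := m.cast_nonneg
  have hθ₀ : 0 < θ := by nlinarith [pi_pos]
  have hsin : 0 < sin ((m + 1) * θ) := sin_pos_of_pos_of_lt_pi (by positivity) (by nlinarith)
  have hmono : sin ((m + 1) * θ) ≤ sin ((m + 2) * θ) :=
    sin_le_sin_of_le_of_le_pi_sub (by positivity) (by nlinarith) (by nlinarith)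
  have hrec := sin_add_add_sin_sub ((m + 1) * θ) θ
  simp only [sinSeq]
  push_cast
  ring_nf at hrec hmono hsin ⊢
  nlinarith [mul_lt_mul_of_pos_right hR hsin]

lemma sinSeq_succ_succ_eq_neg_mul (hθ : (2 * h + 3) * θ = π)
    (hQ : R ^ 2 + (2 - 2 * cos θ) * R = 1) : sinSeq θ R (h + 2) = -R * sinSeq θ R (h + 1) := by
  have hsym : sin ((h + 2) * θ) = sin ((h + 1) * θ) := by
    rw [← sin_pi_sub, ← hθ]; ring_nf
  have hrec := sin_add_add_sin_sub ((h + 1) * θ) θ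
  simp only [sinSeq]
  push_cast
  ring_nf at hsym hrec ⊢
  linear_combination (-R) * hrec + 2 * R * hsym + sin (h * θ + θ) * hQ

end SinSeq

theorem iterate_neg_one_div_add_two_cos_eq_neg {h : ℕ} {θ R : ℝ} (hθ : (2 * h + 3) * θ = π)
    (hQ : R ^ 2 + (2 - 2 * cos θ) * R = 1) (hR : 2 * cos θ - 1 < R) :
    (fun x : ℝ => -1 / x + 2 * cos θ)^[h + 1] R = -R := by
  have hθ₀ : 0 < θ := by nlinarith [pi_pos, h.cast_nonneg (α := ℝ)]
  have hsin : sin θ ≠ 0 := (sin_pos_of_pos_of_lt_pi hθ₀ (by nlinarith [h.cast_nonneg (α := ℝ)])).ne'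
  have hne : ∀ k, 0 < k → k ≤ h + 1 → sinSeq θ R k ≠ 0 := fun k hk₀ hk =>
    (sinSeq_pos θ R hθ hR hk₀ hk).ne'
  calc (fun x : ℝ => -1 / x + 2 * cos θ)^[h + 1] R
      = (fun x : ℝ => -1 / x + 2 * cos θ)^[h + 1] (sinSeq θ R 1 / sinSeq θ R 0) := by
        rw [sinSeq_one_div_zero θ R hsin]
    _ = sinSeq θ R (h + 2) / sinSeq θ R (h + 1) := iterate_neg_one_div_add_div (sinSeq_add_two θ R) hne
    _ = -R := by
        rw [sinSeq_succ_succ_eq_neg_mul θ R hθ hQ, mul_div_cancel_right₀ _ (hne _ h.succ_pos le_rfl)]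

/-- for odd `q = 2h+3`, with
`R_q = (λ_q - 2 + √((2-λ_q)² + 4))/2` (the positive root of `R² + (2-λ_q)R = 1`),
the Möbius transformation `(TS)^{h+1}` (where `TS · x = -1/x + λ_q`) maps `R_q`
to `-R_q`, and `λ_q/2 < R_q ≤ 1`. -/
theorem stmt3 (h q : ℕ) (hq : q = 2 * h + 3) (R : ℝ)
    (hR : R = (lam q - 2 + Real.sqrt ((2 - lam q) ^ 2 + 4)) / 2) :
    (fun x : ℝ => -1 / x + lam q)^[h + 1] R = -R ∧
    lam q / 2 < R ∧ R ≤ 1 := by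
  obtain ⟨hQ, hR₀⟩ := sq_add_mul_eq_one_and_pos_of_eq hR
  have hL : lam q < 2 := lam_lt_two (by omega)
  have hLR : lam q / 2 < R := half_lt_of_sq_add_mul_eq_one hL hR₀ hQ
  refine ⟨?_, hLR, le_one_of_sq_add_mul_eq_one hL.le hQ⟩
  have hθ : (2 * h + 3) * (π / q) = π := by
    subst hq; push_cast; field_simp
  exact iterate_neg_one_div_add_two_cos_eq_neg hθ hQ (by unfold lam at hL hLR; linarith)
end

section
/- Let q = 2h+3 with h ≥ 1 an integer (so q ≥ 5 odd), λ_q = 2 cos(π/q), and let R_q = (λ_q − 2 + √((2 − λ_q)² + 4))/2 be the unique positive root of R² + (2 − λ_q) R = 1. Let g be the Möbius transformation θ_1^{∘h} ∘ θ_2 ∘ θ_1^{∘(h−1)} ∘ θ_2, where θ_n(x) = −1/(x + n λ_q). Then r_q := R_q − λ_q satisfies −λ_q/2 < r_q < 0, g(r_q) = r_q, and the derivative of g at this fixed point equals g′(r_q) = ((2 − λ_q)/(2 + R_q λ_q))². (Thus r_q = [0; \overline{1^{h}, 2, 1^{h−1}, 2}] is the attractive fixed point of the hyperbolic element (ST)^{h}(ST²)(ST)^{h−1}(ST²)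 of G_q.) -/
/-!
A map `θ_c` sends `-p/q` to `-q/(c q - p)` with derivative `(q/(c q - p))²`. So along a sequence
with `x_{k+2} = c_k x_{k+1} - x_k` a composition of `θ`'s sends `-x_0/x_1` to `-x_N/x_{N+1}`,
and the derivatives telescope to `(x_1/x_{N+1})²`. For the constant shift `λ_q = 2 cos t`,
`t = π/q`, every such sequence is a combination of `u_k = sin (k t) / sin t`, which is positive
for `0 < k < q` (so no denominator vanishes) and satisfies `u_{h+2} = u_{h+1}` when `q = 2h+3`.
Together with Cassini's identity `u_{k+1}² - u_k u_{k+2} = 1`, which gives `(2 - λ_q) u_{h+1}² = 1`,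
this closes the orbit of `r_q` after the word `2, 1^(h-1), 2, 1^h` and computes the derivative.
-/

open Real

def chebSeq (l x y : ℝ) : ℕ → ℝ
  | 0 => x
  | 1 => y
  | k + 2 => l * chebSeq l x y (k + 1) - chebSeq l x y k

section Chebyshev

variable (l x y : ℝ)

@[simp] lemma chebSeq_zero : chebSeq l x y 0 = x := rfl

@[simp] lemma chebSeq_one : chebSeq l x y 1 = y := rfl

lemma chebSeq_add_two (k : ℕ) :
    chebSeq l x y (k + 2) = l * chebSeq l x y (k + 1) - chebSeq l x y k := rfl

lemma chebSeq_eq (k : ℕ) :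
    chebSeq l x y k = x * chebSeq l 0 1 (k + 1) + (y - l * x) * chebSeq l 0 1 k := by
  induction k using Nat.twoStepInduction with
  | zero => simp
  | one => show y = x * (l * 1 - 0) + (y - l * x) * 1; ring
  | more k ih₀ ih₁ =>
    rw [chebSeq_add_two, ih₀, ih₁, chebSeq_add_two l 0 1 (k + 1), chebSeq_add_two l 0 1 k]
    ring

lemma chebSeq_sq_sub_mul (k : ℕ) :
    chebSeq l 0 1 (k + 1) ^ 2 - chebSeq l 0 1 k * chebSeq l 0 1 (k + 2) = 1 := by
  induction k with
  | zero => simp [chebSeq_add_two]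
  | succ k ih =>
    rw [chebSeq_add_two l 0 1 (k + 1), chebSeq_add_two l 0 1 k] at *
    linear_combination ih

lemma chebSeq_two_cos_mul_sin (t : ℝ) (k : ℕ) :
    chebSeq (2 * cos t) 0 1 k * sin t = sin (k * t) := by
  induction k using Nat.twoStepInduction with
  | zero => simp
  | one => simp
  | more k ih₀ ih₁ =>
    rw [chebSeq_add_two, sub_mul, mul_assoc, ih₀, ih₁]
    push_cast
    rw [show ((k : ℝ) + 2) * t = (k + 1) * t + t by ring,
      show (k : ℝ) * t = (k + 1) * t - t by ring, sin_add, sin_sub]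
    ring

end Chebyshev

lemma chebSeq_lam_pos {n k : ℕ} (hk : 0 < k) (hkn : k < n) : 0 < chebSeq (lam n) 0 1 k := by
  have hn : (0 : ℝ) < n := by exact_mod_cast hk.trans hkn
  have hkt : k * (π / n) < π := by
    rw [← mul_div_assoc, div_lt_iff₀ hn, mul_comm]
    exact mul_lt_mul_of_pos_left (by exact_mod_cast hkn) pi_pos
  have hsin : 0 < sin (π / n) := sin_pos_of_pos_of_lt_pi (by positivity)
    (lt_of_le_of_lt (le_mul_of_one_le_left (by positivity) (by exact_mod_cast hk)) hkt)
  have hskt : 0 < sin (k * (π / n)) := sin_pos_of_pos_of_lt_pi (by positivity) hkt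
  rw [← chebSeq_two_cos_mul_sin] at hskt
  rw [lam]
  exact (mul_pos_iff_of_pos_right hsin).1 hskt

lemma chebSeq_lam_eq {n j k : ℕ} (hn : 1 < n) (h : j + k = n) :
    chebSeq (lam n) 0 1 j = chebSeq (lam n) 0 1 k := by
  have hn' : (1 : ℝ) < n := by exact_mod_cast hn
  have hjk : (j : ℝ) + k ≠ 0 := by rw [← Nat.cast_add, h]; positivity
  have hsin : sin (π / n) ≠ 0 :=
    (sin_pos_of_pos_of_lt_pi (by positivity) (div_lt_self pi_pos hn')).ne'
  rw [lam]
  apply mul_right_cancel₀ hsin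
  rw [chebSeq_two_cos_mul_sin, chebSeq_two_cos_mul_sin,
    show (j : ℝ) * (π / n) = π - k * (π / n) by rw [← h]; push_cast; field_simp; ring,
    sin_pi_sub]

lemma one_lt_lam {q : ℕ} (hq : 3 < q) : 1 < lam q := by
  have hq' : (3 : ℝ) < q := by exact_mod_cast hq
  have hlt : π / q < π / 3 := div_lt_div_of_pos_left pi_pos (by norm_num) hq'
  have := cos_lt_cos_of_nonneg_of_le_pi (by positivity) (by linarith [pi_pos]) hlt
  rw [cos_pi_div_three] at this
  rw [lam]; linarith

noncomputable def theta (c x : ℝ) : ℝ := -1 / (x + c)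

lemma hasDerivAt_theta {c x : ℝ} (hx : x + c ≠ 0) :
    HasDerivAt (theta c) (1 / (x + c) ^ 2) x := by
  refine ((hasDerivAt_const x (-1 : ℝ)).div ((hasDerivAt_id x).add_const c) hx).congr_deriv ?_
  simp

/-- `F` sends the point `-p/q` to `-p'/q'`, with the derivative there that a Möbius map of
determinant one sending the vector `(p, q)` to `(p', q')` would have. -/
def MapsFrac (F : ℝ → ℝ) (p q p' q' : ℝ) : Prop :=
  F (-p / q) = -p' / q' ∧ HasDerivAt F ((q / q') ^ 2) (-p / q)

lemma MapsFrac.comp {F G : ℝ → ℝ} {p q p' q' p'' q'' : ℝ} (hG : MapsFrac G p' q' p'' q'')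
    (hF : MapsFrac F p q p' q') (hq' : q' ≠ 0) : MapsFrac (G ∘ F) p q p'' q'' := by
  refine ⟨by rw [Function.comp_apply, hF.1, hG.1], ?_⟩
  refine ((hF.1 ▸ hG.2).comp (-p / q) hF.2).congr_deriv ?_
  rw [← mul_pow, div_mul_div_cancel₀' hq']

lemma mapsFrac_theta {c p q s : ℝ} (hq : q ≠ 0) (hs : s ≠ 0) (h : c * q - p = s) :
    MapsFrac (theta c) p q q s := by
  have hx : -p / q + c = s / q := by rw [← h]; field_simp; ring
  refine ⟨by rw [theta, hx, div_div_eq_mul_div, neg_one_mul], ?_⟩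
  convert hasDerivAt_theta (hx ▸ div_ne_zero hs hq) using 1
  rw [hx, one_div, ← inv_pow, inv_div]

lemma mapsFrac_iterate_theta {l x y : ℝ} (n : ℕ) (hne : ∀ k ≤ n, chebSeq l x y (k + 1) ≠ 0) :
    MapsFrac (theta l)^[n] x y (chebSeq l x y n) (chebSeq l x y (n + 1)) := by
  induction n with
  | zero =>
    have hy : y ≠ 0 := hne 0 le_rfl
    exact ⟨rfl, by simpa [hy] using hasDerivAt_id (-x / y)⟩
  | succ n ih =>
    rw [Function.iterate_succ']
    exact (mapsFrac_theta (hne n (by omega)) (hne (n + 1) le_rfl) rfl).comp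
      (ih fun k hk => hne k (by omega)) (hne n (by omega))

lemma mapsFrac_iterate_theta_comp_theta {l p q : ℝ} (n : ℕ)
    (hne : ∀ k ≤ n + 1, chebSeq l q (2 * l * q - p) k ≠ 0) :
    MapsFrac ((theta l)^[n] ∘ theta (2 * l)) p q
      (chebSeq l q (2 * l * q - p) n) (chebSeq l q (2 * l * q - p) (n + 1)) :=
  (mapsFrac_iterate_theta n fun k hk => hne (k + 1) (by omega)).comp
    (mapsFrac_theta (hne 0 (by omega)) (hne 1 (by omega)) rfl) (hne 1 (by omega))

theorem theta_word_fixed_and_hasDerivAt {l R : ℝ} (m : ℕ)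
    (hu : ∀ k, 0 < k → k ≤ m + 3 → 0 < chebSeq l 0 1 k)
    (hsym : chebSeq l 0 1 (m + 3) = chebSeq l 0 1 (m + 2))
    (hR0 : 0 < R) (hR : R ^ 2 + (2 - l) * R = 1) :
    let g := (theta l)^[m + 1] ∘ theta (2 * l) ∘ (theta l)^[m] ∘ theta (2 * l)
    g (R - l) = R - l ∧ HasDerivAt g (((2 - l) / (2 + R * l)) ^ 2) (R - l) := by
  intro g
  set u := chebSeq l 0 1
  have hu₀ : ∀ k ≤ m + 2, 0 ≤ u k := by
    rintro (_ | k) hk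
    · exact le_rfl
    · exact (hu _ k.succ_pos (by omega)).le
  have hrec : u (m + 3) = l * u (m + 2) - u (m + 1) := chebSeq_add_two l 0 1 (m + 1)
  have hU : u (m + 1) = (l - 1) * u (m + 2) := by linear_combination hrec - hsym
  have hcas : (2 - l) * u (m + 2) ^ 2 = 1 := by
    have hdet : u (m + 2) ^ 2 - u (m + 1) * u (m + 3) = 1 := chebSeq_sq_sub_mul l (m + 1)
    linear_combination hdet + u (m + 2) * hU + u (m + 1) * hsym
  set a := chebSeq l 1 (2 * l * 1 - (l - R)) with ha_def
  have ha : ∀ k, a k = u (k + 1) + R * u k := fun k => by rw [ha_def, chebSeq_eq]; ring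
  have ha_pos : ∀ k ≤ m + 2, 0 < a k := fun k hk => by
    rw [ha]; nlinarith [hu (k + 1) k.succ_pos (by omega), hu₀ k hk]
  set b := chebSeq l (a (m + 1)) (2 * l * a (m + 1) - a m) with hb_def
  have hb : ∀ k, b k = a (m + 1) * u (k + 1) + a (m + 2) * u k := fun k => by
    rw [hb_def, chebSeq_eq, show a (m + 2) = l * a (m + 1) - a m from rfl]
    ring
  have hb_pos : ∀ k ≤ m + 2, 0 < b k := fun k hk => by
    rw [hb]
    nlinarith [hu (k + 1) k.succ_pos (by omega), hu₀ k hk, ha_pos (m + 1) (by omega),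
      ha_pos (m + 2) le_rfl]
  obtain ⟨hval, hder⟩ : MapsFrac g (l - R) 1 (b (m + 1)) (b (m + 2)) :=
    (mapsFrac_iterate_theta_comp_theta (m + 1) fun k hk => (hb_pos k hk).ne').comp
      (mapsFrac_iterate_theta_comp_theta m fun k hk => (ha_pos k (by omega)).ne')
      (ha_pos (m + 1) (by omega)).ne'
  have hfix : b (m + 1) = (l - R) * b (m + 2) := by
    rw [hb, hb, ha, ha, hsym, hU]
    linear_combination l * u (m + 2) ^ 2 * hR
  have hend : (2 - l) * b (m + 2) = 2 + R * l := by
    rw [hb, ha, ha, hsym, hU]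
    linear_combination (2 + R * l) * hcas
  have hstart : -(l - R) / 1 = R - l := by ring
  rw [hstart, hfix, neg_div, mul_div_assoc, div_self (hb_pos (m + 2) le_rfl).ne'] at hval
  rw [hstart] at hder
  rw [← hend, div_mul_cancel_left₀ (left_ne_zero_of_mul_eq_one hcas), inv_eq_one_div]
  exact ⟨hval.trans (by ring), hder⟩

lemma sq_add_mul_eq_one_of_eq {b R : ℝ} (hR : R = (-b + √(b ^ 2 + 4)) / 2) :
    R ^ 2 + b * R = 1 ∧ 0 < R := by
  have hs := sq_sqrt (by positivity : (0 : ℝ) ≤ b ^ 2 + 4)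
  have hb : b < √(b ^ 2 + 4) := lt_sqrt_of_sq_lt (by linarith)
  subst hR
  exact ⟨by linear_combination hs / 4, by linarith⟩

/-- for odd `q = 2h+3` with `h ≥ 1`, with
`R_q = (λ_q - 2 + √((2-λ_q)² + 4))/2` the positive root of `R² + (2-λ_q)R = 1`,
the point `r_q := R_q - λ_q` satisfies `-λ_q/2 < r_q < 0`, it is a fixed point of
`g = θ₁^{∘h} ∘ θ₂ ∘ θ₁^{∘(h-1)} ∘ θ₂` (where `θ_n(x) = -1/(x + nλ_q)`), and
`g'(r_q) = ((2-λ_q)/(2+R_qλ_q))²`. -/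
theorem stmt5 (h q : ℕ) (hh : 1 ≤ h) (hq : q = 2 * h + 3) (R : ℝ)
    (hR : R = (lam q - 2 + Real.sqrt ((2 - lam q) ^ 2 + 4)) / 2) :
    let r : ℝ := R - lam q
    let g : ℝ → ℝ :=
      (fun x : ℝ => -1 / (x + lam q))^[h] ∘ (fun x : ℝ => -1 / (x + 2 * lam q)) ∘
        (fun x : ℝ => -1 / (x + lam q))^[h - 1] ∘ (fun x : ℝ => -1 / (x + 2 * lam q))
    (-(lam q) / 2 < r ∧ r < 0) ∧
    g r = r ∧
    deriv g r = ((2 - lam q) / (2 + R * lam q)) ^ 2 := by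
  obtain ⟨m, rfl⟩ : ∃ m, h = m + 1 := ⟨h - 1, by omega⟩
  obtain ⟨hRq, hR0⟩ := sq_add_mul_eq_one_of_eq (b := 2 - lam q) (hR.trans (by ring))
  have hl1 := one_lt_lam (q := q) (by omega)
  have hl2 := lam_lt_two (q := q) (by omega)
  obtain ⟨hfix, hderiv⟩ := theta_word_fixed_and_hasDerivAt (l := lam q) m
    (fun k hk _ => chebSeq_lam_pos hk (by omega)) (chebSeq_lam_eq (by omega) (by omega)) hR0 hRq
  exact ⟨⟨by nlinarith, by nlinarith⟩, hfix, hderiv.deriv⟩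
end

section
/- Let q = 4 (so λ_4 = √2) and θ_n(x) = −1/(x + n√2) for n ∈ ℤ∖{0}. Set I_1 = (−1, √2/4) and I_{−1} = −I_1 = (−√2/4, 1). Then [−√2/2, 0] ⊂ I_1, [0, √2/2] ⊂ I_{−1}, and: for every x in the closed interval [−1, √2/4], θ_n(x) ∈ I_1 for every integer n ≥ 2 and θ_n(x) ∈ I_{−1} for every integer n ≤ −1; for every x in the closed interval [−√2/4, 1], θ_n(x) ∈ I_{−1} for every integer n ≤ −2 and θ_n(x) ∈ I_1 for every integer n ≥ 1. -/
/-! In each case `|x + n√2| > 1`, so `-1 / (x + n√2)` lies in `(-1, 0)` or in `(0, 1)` according to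
the sign of `n`, and both of these intervals sit inside the target. The only arithmetic input is
`4/3 < √2 < 3/2`; the lower bound is sharp for the case `n = -1`, `x = √2/4`, where
`x + n√2 = -3√2/4`. -/

open Set Real

lemma four_thirds_lt_sqrt_two : (4 / 3 : ℝ) < √2 :=
  Real.lt_sqrt_of_sq_lt (by norm_num)

lemma neg_one_div_mem_Ioo_neg_one_zero {d : ℝ} (hd : 1 < d) : -1 / d ∈ Ioo (-1 : ℝ) 0 := by
  have hd0 : 0 < d := by linarith
  refine ⟨?_, div_neg_of_neg_of_pos (by norm_num) hd0⟩
  rw [lt_div_iff₀ hd0]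
  linarith

lemma neg_one_div_mem_Ioo_zero_one {d : ℝ} (hd : d < -1) : -1 / d ∈ Ioo (0 : ℝ) 1 := by
  have hd0 : d < 0 := by linarith
  exact ⟨div_pos_of_neg_of_neg (by norm_num) hd0, (div_lt_one_of_neg hd0).2 (by linarith)⟩

/-- for `q = 4` (so `λ_4 = √2`) and `θ_n(x) = -1/(x+n√2)`, with
`I_1 = (-1, √2/4)` and `I_{-1} = (-√2/4, 1)`: `[-√2/2, 0] ⊂ I_1`,
`[0, √2/2] ⊂ I_{-1}`, and for all `x ∈ [-1, √2/4]`: `θ_n(x) ∈ I_1` for `n ≥ 2`,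
`θ_n(x) ∈ I_{-1}` for `n ≤ -1`; for all `x ∈ [-√2/4, 1]`: `θ_n(x) ∈ I_{-1}` for
`n ≤ -2`, `θ_n(x) ∈ I_1` for `n ≥ 1`. -/
theorem stmt8 :
    Set.Icc (-(Real.sqrt 2) / 2) 0 ⊆ Set.Ioo (-1 : ℝ) (Real.sqrt 2 / 4) ∧
    Set.Icc (0 : ℝ) (Real.sqrt 2 / 2) ⊆ Set.Ioo (-(Real.sqrt 2) / 4) 1 ∧
    (∀ x ∈ Set.Icc (-1 : ℝ) (Real.sqrt 2 / 4),
      (∀ n : ℤ, 2 ≤ n →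
        -1 / (x + (n : ℝ) * Real.sqrt 2) ∈ Set.Ioo (-1 : ℝ) (Real.sqrt 2 / 4)) ∧
      (∀ n : ℤ, n ≤ -1 →
        -1 / (x + (n : ℝ) * Real.sqrt 2) ∈ Set.Ioo (-(Real.sqrt 2) / 4) 1)) ∧
    (∀ x ∈ Set.Icc (-(Real.sqrt 2) / 4) 1,
      (∀ n : ℤ, n ≤ -2 →
        -1 / (x + (n : ℝ) * Real.sqrt 2) ∈ Set.Ioo (-(Real.sqrt 2) / 4) 1) ∧
      (∀ n : ℤ, 1 ≤ n →
        -1 / (x + (n : ℝ) * Real.sqrt 2) ∈ Set.Ioo (-1 : ℝ) (Real.sqrt 2 / 4))) := by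
  have hlo := four_thirds_lt_sqrt_two
  have hhi := sqrt_two_lt_three_halves
  have hneg : Ioo (-1 : ℝ) 0 ⊆ Ioo (-1) (√2 / 4) := Ioo_subset_Ioo_right (by positivity)
  have hpos : Ioo (0 : ℝ) 1 ⊆ Ioo (-√2 / 4) 1 := Ioo_subset_Ioo_left (by linarith)
  refine ⟨fun x ⟨h₁, h₂⟩ => ⟨by linarith, by linarith⟩, fun x ⟨h₁, h₂⟩ => ⟨by linarith, by linarith⟩,
    fun x ⟨h₁, h₂⟩ => ⟨fun n hn => ?_, fun n hn => ?_⟩,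
    fun x ⟨h₁, h₂⟩ => ⟨fun n hn => ?_, fun n hn => ?_⟩⟩
  · have hn : (2 : ℝ) ≤ n := by exact_mod_cast hn
    exact hneg (neg_one_div_mem_Ioo_neg_one_zero (by nlinarith))
  · have hn : (n : ℝ) ≤ -1 := by exact_mod_cast hn
    exact hpos (neg_one_div_mem_Ioo_zero_one (by nlinarith))
  · have hn : (n : ℝ) ≤ -2 := by exact_mod_cast hn
    exact hpos (neg_one_div_mem_Ioo_zero_one (by nlinarith))
  · have hn : (1 : ℝ) ≤ n := by exact_mod_cast hn
    exact hneg (neg_one_div_mem_Ioo_neg_one_zero (by nlinarith))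
end

section
/- Let q = 2h+2 with h ≥ 2 an integer and λ_q = 2 cos(π/q). Define d_0 = 0, d_{j+1} = −1/(d_j − λ_q) (so d_j = (S T^{−1})^{j} · 0), and c_i = d_i − λ_q = T^{−1}(S T^{−1})^{i} · 0 for 0 ≤ i ≤ h. Then (S T)^{h−i} · (−λ_q/2) = c_i for every 0 ≤ i ≤ h (equivalently θ_1^{∘(h−i)}(−λ_q/2) = c_i, where θ_1(x) = −1/(x + λ_q)), and these points are strictly increasing: −λ_q = c_0 < c_1 < ⋯ < c_{h−1} < c_h = −λ_q/2. -/
open Real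

theorem Function.iterate_apply_of_map_succ {α : Type*} {f : α → α} {c : ℕ → α}
    (hc : ∀ i, f (c (i + 1)) = c i) (i k : ℕ) : f^[k] (c (i + k)) = c i := by
  induction k generalizing i with
  | zero => rfl
  | succ k ih => rw [Function.iterate_succ_apply, ← add_assoc, hc, ih]

theorem sin_sub_mul_sin_add (x y : ℝ) : sin (x - y) * sin (x + y) = sin x ^ 2 - sin y ^ 2 := by
  rw [sin_sub, sin_add]
  linear_combination sin x ^ 2 * sin_sq_add_cos_sq y - sin y ^ 2 * sin_sq_add_cos_sq x

theorem sin_div_sin_add_sub_two_cos {x θ : ℝ} (hx : sin (x + θ) ≠ 0) :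
    sin x / sin (x + θ) - 2 * cos θ = -(sin (x + 2 * θ) / sin (x + θ)) := by
  have chebyshev : sin (x + 2 * θ) = 2 * cos θ * sin (x + θ) - sin x := by
    rw [show x + 2 * θ = x + θ + θ by ring, show x = x + θ - θ by ring, sin_add, sin_sub]
    ring_nf
  rw [chebyshev]
  field_simp
  ring

theorem sin_add_div_sin_lt_sin_div_sin_sub {x θ : ℝ} (hθ : sin θ ≠ 0)
    (hx : 0 < sin (x - θ)) (hx' : 0 < sin x) :
    sin (x + θ) / sin x < sin x / sin (x - θ) := by
  rw [div_lt_div_iff₀ hx' hx, mul_comm, sin_sub_mul_sin_add]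
  nlinarith [sq_pos_of_ne_zero hθ]

section

variable {θ : ℝ}

theorem sin_nat_mul_pos (hθ : 0 < θ) {n : ℕ} (hn : 0 < n) (hnθ : n * θ < π) :
    0 < sin (n * θ) :=
  sin_pos_of_pos_of_lt_pi (mul_pos (Nat.cast_pos.mpr hn) hθ) hnθ

theorem iterate_neg_one_div_sub_two_cos (hθ : 0 < θ) {j : ℕ} (hj : j * θ < π) :
    (fun x : ℝ => -1 / (x - 2 * cos θ))^[j] 0 = sin (j * θ) / sin ((j + 1) * θ) := by
  induction j with
  | zero => simp
  | succ j ih =>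
    have hjθ : (j : ℝ) * θ < π := by push_cast at hj; linarith
    have hsin : sin (j * θ + θ) ≠ 0 := by
      simpa [add_mul] using (sin_nat_mul_pos hθ j.succ_pos hj).ne'
    rw [Function.iterate_succ_apply', ih hjθ, add_mul, one_mul,
      sin_div_sin_add_sub_two_cos hsin, div_neg, neg_div, neg_neg, one_div_div]
    push_cast
    ring_nf

theorem iterate_neg_one_div_sub_two_cos_sub_two_cos (hθ : 0 < θ) {i : ℕ}
    (hi : (i + 1) * θ < π) :
    (fun x : ℝ => -1 / (x - 2 * cos θ))^[i] 0 - 2 * cos θ =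
      -(sin ((i + 2) * θ) / sin ((i + 1) * θ)) := by
  have hsin : sin (i * θ + θ) ≠ 0 := by
    simpa [add_mul] using (sin_nat_mul_pos hθ i.succ_pos (by push_cast; exact hi)).ne'
  rw [iterate_neg_one_div_sub_two_cos hθ (by linarith), add_mul, one_mul,
    sin_div_sin_add_sub_two_cos hsin, add_mul]

theorem strictAntiOn_sin_add_two_mul_div_sin_add_one_mul (hθ : 0 < θ) {N : ℕ}
    (hN : (N + 1) * θ < π) :
    StrictAntiOn (fun n : ℕ => sin ((n + 2) * θ) / sin ((n + 1) * θ)) (Set.Iic N) := by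
  refine strictAntiOn_Iic_of_succ_lt fun m hm => ?_
  have hmN : ((m : ℝ) + 2) * θ ≤ (N + 1) * θ := by
    have : (m : ℝ) + 1 ≤ N := by exact_mod_cast hm
    nlinarith
  have hsinθ : sin θ ≠ 0 := (sin_pos_of_pos_of_lt_pi hθ (by nlinarith)).ne'
  have hsin₁ : 0 < sin ((m + 1) * θ) := by
    simpa using sin_nat_mul_pos hθ m.succ_pos (by push_cast; linarith)
  have hsin₂ : 0 < sin ((m + 2) * θ) := by
    simpa [add_assoc, one_add_one_eq_two] using
      sin_nat_mul_pos hθ (m + 1).succ_pos (by push_cast; linarith)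
  have key := sin_add_div_sin_lt_sin_div_sin_sub hsinθ
    (by rwa [show ((m : ℝ) + 2) * θ - θ = (m + 1) * θ by ring]) hsin₂
  simp only [Order.succ_eq_add_one, Nat.cast_add, Nat.cast_one]
  calc sin ((m + 1 + 2) * θ) / sin ((m + 1 + 1) * θ)
      = sin ((m + 2) * θ + θ) / sin ((m + 2) * θ) := by ring_nf
    _ < sin ((m + 2) * θ) / sin ((m + 2) * θ - θ) := key
    _ = sin ((m + 2) * θ) / sin ((m + 1) * θ) := by ring_nf

end

theorem stmt9_general (h q : ℕ) (hq : q = 2 * h + 2) :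
    let d : ℕ → ℝ := fun j => (fun x : ℝ => -1 / (x - lam q))^[j] 0
    let c : ℕ → ℝ := fun i => d i - lam q
    (∀ i ≤ h, (fun x : ℝ => -1 / (x + lam q))^[h - i] (-(lam q) / 2) = c i) ∧
    c 0 = -(lam q) ∧ c h = -(lam q) / 2 ∧
    (∀ i j : ℕ, i < j → j ≤ h → c i < c j) := by
  intro d c
  set θ := π / q with hθ_def
  have hθ : 0 < θ := by subst hq; positivity
  have hhθ : ((h : ℝ) + 1) * θ = π / 2 := by
    rw [hθ_def, hq]; push_cast; field_simp
  have hhθ_lt : ((h : ℝ) + 1) * θ < π := by linarith [pi_pos]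
  have hc : ∀ i ≤ h, c i = -(sin ((i + 2) * θ) / sin ((i + 1) * θ)) := fun i hi =>
    iterate_neg_one_div_sub_two_cos_sub_two_cos hθ (lt_of_le_of_lt (by gcongr) hhθ_lt)
  have hch : c h = -(lam q) / 2 := by
    rw [hc h le_rfl, show ((h : ℝ) + 2) * θ = θ + (h + 1) * θ by ring, hhθ,
      sin_add_pi_div_two, sin_pi_div_two, lam, ← hθ_def]
    ring
  have hc_succ : ∀ i, -1 / (c (i + 1) + lam q) = c i := fun i => by
    simp only [c, d, sub_add_cancel, Function.iterate_succ_apply', div_div_eq_mul_div]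
    ring
  refine ⟨fun i hi => ?_, by simp [c, d], hch, fun i j hij hj => ?_⟩
  · have orbit :=
      Function.iterate_apply_of_map_succ (f := fun x => -1 / (x + lam q)) hc_succ i (h - i)
    rwa [Nat.add_sub_cancel' hi, hch] at orbit
  · rw [hc i (by omega), hc j hj, neg_lt_neg_iff]
    exact strictAntiOn_sin_add_two_mul_div_sin_add_one_mul hθ hhθ_lt
      (Set.mem_Iic.mpr (by omega)) (Set.mem_Iic.mpr hj) hij

/-- for even `q = 2h+2` with `h ≥ 2`, with `d_0 = 0`,
`d_{j+1} = -1/(d_j - λ_q)` and `c_i = d_i - λ_q`, one has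
`(ST)^{h-i} · (-λ_q/2) = c_i` for `0 ≤ i ≤ h` (where `ST · x = -1/(x+λ_q)`), and
`-λ_q = c_0 < c_1 < ⋯ < c_{h-1} < c_h = -λ_q/2`. -/
theorem stmt9 (h q : ℕ) (hh : 2 ≤ h) (hq : q = 2 * h + 2) :
    let d : ℕ → ℝ := fun j => (fun x : ℝ => -1 / (x - lam q))^[j] 0
    let c : ℕ → ℝ := fun i => d i - lam q
    (∀ i ≤ h, (fun x : ℝ => -1 / (x + lam q))^[h - i] (-(lam q) / 2) = c i) ∧
    c 0 = -(lam q) ∧ c h = -(lam q) / 2 ∧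
    (∀ i j : ℕ, i < j → j ≤ h → c i < c j) :=
  stmt9_general h q hq
end

section
/- Let q = 3 (λ_3 = 1), let s ∈ ℂ with Re(s) > 1/2, let ε ∈ {+1, −1}, and let g : [−1, 1] → ℂ be a bounded function satisfying the eigenvalue-one equation of the reduced transfer operator L_{s,ε}: for every x ∈ [−1, 1], g(x) = Σ_{n=3}^{∞} ((x+n)²)^{−s} g(−1/(x+n)) + ε · Σ_{n=2}^{∞} ((x−n)²)^{−s} g(1/(x−n)) (both series converge absolutely, since g is bounded, Re(s) > 1/2, and the arguments −1/(x+n) ∈ [−1/2, 0) and 1/(x−n) ∈ [−1, 0) lie in [−1,1]). Then g satisfies the four-term functional equation: for every x ∈ [−1, 0], g(x) = g(x+1) + ((x+3)²)^{−s} g(−1/(x+3)) − ε · ((x−1)²)^{−s} g(1/(x−1)). -/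
/-!
Put `F y = (y²)^{-s} g(-1/y)`. Since the weight is even, the `ε`-series is a tail of the same
`F`, so the eigenvalue equation at `x` and at `x + 1` reads
`g x = Σₙ F (n + x + 3) + ε Σₙ F (n + 2 - x)` and `g (x + 1) = Σₙ F (n + x + 4) + ε Σₙ F (n + 1 - x)`.
Both series converge absolutely for `Re s > 1/2` (compare with `Σ |n + c|^{-2 Re s}`), so
subtracting the two equations leaves only the first terms `F (x + 3)` and `F (1 - x)`.
-/

open Set

/-- `(y²)^{-s} g(σ/y)`: the terms of the transfer operator are `transferTerm s g (-1) (x + n)` and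
`transferTerm s g 1 (x - n)`. -/
noncomputable def transferTerm (s : ℂ) (g : ℝ → ℂ) (σ y : ℝ) : ℂ :=
  Complex.exp (-s * (Real.log (y ^ 2) : ℂ)) * g (σ / y)

theorem transferTerm_neg (s : ℂ) (g : ℝ → ℂ) (σ y : ℝ) :
    transferTerm s g σ (-y) = transferTerm s g (-σ) y := by
  simp only [transferTerm, neg_sq, div_neg, neg_div]

theorem norm_cexp_neg_mul_log_sq (s : ℂ) {y : ℝ} (hy : y ≠ 0) :
    ‖Complex.exp (-s * (Real.log (y ^ 2) : ℂ))‖ = 1 / |y| ^ (2 * s.re) := by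
  rw [Complex.norm_exp, ← sq_abs y, Real.log_pow, Real.rpow_def_of_pos (abs_pos.2 hy), one_div,
    ← Real.exp_neg]
  congr 1
  simp only [Complex.neg_re, Complex.mul_re, Complex.ofReal_re, Complex.ofReal_im, mul_zero,
    sub_zero]
  push_cast
  ring

theorem div_mem_Icc_neg_one_one {σ y : ℝ} (hσ : |σ| ≤ 1) (hy : 1 ≤ |y|) :
    σ / y ∈ Icc (-1 : ℝ) 1 := by
  rw [mem_Icc, ← abs_le, abs_div]
  exact div_le_one_of_le₀ (hσ.trans hy) (abs_nonneg y)

theorem summable_transferTerm_nat_add {s : ℂ} (hs : 1 / 2 < s.re) {g : ℝ → ℂ} {C : ℝ}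
    (hg : ∀ y ∈ Icc (-1 : ℝ) 1, ‖g y‖ ≤ C) {σ c : ℝ} (hσ : |σ| ≤ 1) (hc : 1 ≤ c) :
    Summable fun n : ℕ => transferTerm s g σ (n + c) := by
  refine Summable.of_norm_bounded
    (((Real.summable_one_div_nat_add_rpow c (2 * s.re)).2 (by linarith)).mul_right C) fun n => ?_
  have hy : 1 ≤ |(n : ℝ) + c| := by
    rw [abs_of_pos (by positivity)]; linarith [n.cast_nonneg (α := ℝ)]
  rw [transferTerm, norm_mul, norm_cexp_neg_mul_log_sq s (by positivity)]
  exact mul_le_mul_of_nonneg_left (hg _ (div_mem_Icc_neg_one_one hσ hy)) (by positivity)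

theorem tsum_nat_add_eq_add_tsum {E : Type*} [AddCommGroup E] [TopologicalSpace E]
    [IsTopologicalAddGroup E] [T2Space E] {F : ℝ → E} {c : ℝ}
    (h : Summable fun n : ℕ => F (n + c)) :
    ∑' n : ℕ, F (n + c) = F c + ∑' n : ℕ, F (n + (c + 1)) := by
  rw [h.tsum_eq_zero_add]
  congr 2
  · simp
  · ext n; push_cast; ring_nf

theorem tsum_transferTerm_add_nat_add (s : ℂ) (g : ℝ → ℂ) (σ x k : ℝ) :
    ∑' n : ℕ, transferTerm s g σ (x + (n + k)) = ∑' n : ℕ, transferTerm s g σ (n + (x + k)) :=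
  tsum_congr fun n => by ring_nf

theorem tsum_transferTerm_sub_nat_add (s : ℂ) (g : ℝ → ℂ) (σ x k : ℝ) :
    ∑' n : ℕ, transferTerm s g σ (x - (n + k)) = ∑' n : ℕ, transferTerm s g (-σ) (n + (k - x)) :=
  tsum_congr fun n => by rw [← transferTerm_neg]; ring_nf

theorem stmt15_general (s : ℂ) (hs : 1 / 2 < s.re) (ε : ℂ)
    (g : ℝ → ℂ) (hb : ∃ C : ℝ, ∀ x ∈ Set.Icc (-1 : ℝ) 1, ‖g x‖ ≤ C)
    (heq : ∀ x ∈ Set.Icc (-1 : ℝ) 1,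
      g x =
        (∑' n : ℕ, Complex.exp (-s * (Real.log ((x + ((n : ℝ) + 3)) ^ 2) : ℂ)) *
            g (-1 / (x + ((n : ℝ) + 3)))) +
        ε * ∑' n : ℕ, Complex.exp (-s * (Real.log ((x - ((n : ℝ) + 2)) ^ 2) : ℂ)) *
            g (1 / (x - ((n : ℝ) + 2)))) :
    ∀ x ∈ Set.Icc (-1 : ℝ) 0,
      g x = g (x + 1) +
        Complex.exp (-s * (Real.log ((x + 3) ^ 2) : ℂ)) * g (-1 / (x + 3)) -
        ε * Complex.exp (-s * (Real.log ((x - 1) ^ 2) : ℂ)) * g (1 / (x - 1)) := by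
  obtain ⟨C, hC⟩ := hb
  set F := transferTerm s g (-1) with hF_def
  have heqF : ∀ y ∈ Icc (-1 : ℝ) 1,
      g y = ∑' n : ℕ, F (n + (y + 3)) + ε * ∑' n : ℕ, F (n + (2 - y)) := fun y hy => by
    have h := heq y hy
    change g y = ∑' n : ℕ, F (y + (n + 3)) + ε * ∑' n : ℕ, transferTerm s g 1 (y - (n + 2)) at h
    rwa [tsum_transferTerm_add_nat_add, tsum_transferTerm_sub_nat_add] at h
  have hsum : ∀ c : ℝ, 1 ≤ c → Summable fun n : ℕ => F (n + c) := fun c hc =>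
    summable_transferTerm_nat_add hs hC (by norm_num) hc
  rintro x ⟨hx₀, hx₁⟩
  have h₀ := heqF x ⟨hx₀, by linarith⟩
  have h₁ := heqF (x + 1) ⟨by linarith, by linarith⟩
  rw [show 2 - x = 1 - x + 1 by ring] at h₀
  rw [show x + 1 + 3 = x + 3 + 1 by ring, show 2 - (x + 1) = 1 - x by ring] at h₁
  have hsplit₀ := tsum_nat_add_eq_add_tsum (hsum (x + 3) (by linarith))
  have hsplit₁ := tsum_nat_add_eq_add_tsum (hsum (1 - x) (by linarith))
  have hF_sub : F (1 - x) = transferTerm s g 1 (x - 1) := by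
    rw [hF_def, ← neg_sub x 1, transferTerm_neg, neg_neg]
  rw [mul_assoc]
  change g x = g (x + 1) + F (x + 3) - ε * transferTerm s g 1 (x - 1)
  linear_combination h₀ - h₁ + hsplit₀ - ε * hsplit₁ - ε * hF_sub

/-- for `q = 3` (`λ_3 = 1`), `Re s > 1/2`, `ε = ±1`, and `g`
bounded on `[-1,1]` satisfying the eigenvalue-one equation of the reduced
transfer operator `L_{s,ε}`, i.e. for every `x ∈ [-1,1]`,
`g(x) = Σ_{n≥3} ((x+n)²)^{-s} g(-1/(x+n)) + ε Σ_{n≥2} ((x-n)²)^{-s} g(1/(x-n))`,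
then `g` satisfies the four-term functional equation
`g(x) = g(x+1) + ((x+3)²)^{-s} g(-1/(x+3)) - ε ((x-1)²)^{-s} g(1/(x-1))`
for every `x ∈ [-1, 0]`. -/
theorem stmt15 (s : ℂ) (hs : 1 / 2 < s.re) (ε : ℂ) (hε : ε = 1 ∨ ε = -1)
    (g : ℝ → ℂ) (hb : ∃ C : ℝ, ∀ x ∈ Set.Icc (-1 : ℝ) 1, ‖g x‖ ≤ C)
    (heq : ∀ x ∈ Set.Icc (-1 : ℝ) 1,
      g x =
        (∑' n : ℕ, Complex.exp (-s * (Real.log ((x + ((n : ℝ) + 3)) ^ 2) : ℂ)) *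
            g (-1 / (x + ((n : ℝ) + 3)))) +
        ε * ∑' n : ℕ, Complex.exp (-s * (Real.log ((x - ((n : ℝ) + 2)) ^ 2) : ℂ)) *
            g (1 / (x - ((n : ℝ) + 2)))) :
    ∀ x ∈ Set.Icc (-1 : ℝ) 0,
      g x = g (x + 1) +
        Complex.exp (-s * (Real.log ((x + 3) ^ 2) : ℂ)) * g (-1 / (x + 3)) -
        ε * Complex.exp (-s * (Real.log ((x - 1) ^ 2) : ℂ)) * g (1 / (x - 1)) :=
  stmt15_general s hs ε g hb heq
end

section
/- Let q = 3 (λ_3 = 1), let s ∈ ℂ with Re(s) > 1/2, let ε ∈ {+1, −1}, and let g : [−1, 1] → ℂ be a bounded function satisfying, for every x ∈ [−1, 1], g(x) = Σ_{n=3}^{∞} ((x+n)²)^{−s} g(−1/(x+n)) + ε · Σ_{n=2}^{∞} ((x−n)²)^{−s} g(1/(x−n)) (both series converge absolutely). Then g has the symmetry g(x) = ε · g(−x−1) for every x ∈ [−1, 0]. -/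
/-! The reflection `x ↦ -x - 1` maps the `n`-th term of the first series at `x` onto the `n`-th
term of the second series at `-x - 1`, and vice versa, because `-x - 1 + (n + 3) = -(x - (n + 2))`
and the weight `((·)²)^{-s}` is even. Hence `g(-x-1) = B + εA` when `g(x) = A + εB`, and
`ε² = 1` gives `g(x) = ε g(-x-1)`. -/

lemma exp_log_sq_mul_of_eq_neg (s : ℂ) (g : ℝ → ℂ) {a b : ℝ} (h : a = -b) :
    Complex.exp (-s * (Real.log (a ^ 2) : ℂ)) * g (-1 / a) =
      Complex.exp (-s * (Real.log (b ^ 2) : ℂ)) * g (1 / b) := by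
  rw [h, neg_sq, div_neg, neg_div, neg_neg]

theorem stmt16_general (s : ℂ) (ε : ℂ) (hε : ε = 1 ∨ ε = -1)
    (g : ℝ → ℂ)
    (heq : ∀ x ∈ Set.Icc (-1 : ℝ) 1,
      g x =
        (∑' n : ℕ, Complex.exp (-s * (Real.log ((x + ((n : ℝ) + 3)) ^ 2) : ℂ)) *
            g (-1 / (x + ((n : ℝ) + 3)))) +
        ε * ∑' n : ℕ, Complex.exp (-s * (Real.log ((x - ((n : ℝ) + 2)) ^ 2) : ℂ)) *
            g (1 / (x - ((n : ℝ) + 2)))) :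
    ∀ x ∈ Set.Icc (-1 : ℝ) 0, g x = ε * g (-x - 1) := by
  rintro x ⟨hx1, hx0⟩
  have hx := heq x ⟨hx1, by linarith⟩
  have hrefl := heq (-x - 1) ⟨by linarith, by linarith⟩
  rw [tsum_congr fun n : ℕ => exp_log_sq_mul_of_eq_neg s g
      (a := -x - 1 + ((n : ℝ) + 3)) (b := x - ((n : ℝ) + 2)) (by ring),
    tsum_congr fun n : ℕ => (exp_log_sq_mul_of_eq_neg s g
      (a := x + ((n : ℝ) + 3)) (b := -x - 1 - ((n : ℝ) + 2)) (by ring)).symm] at hrefl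
  rcases hε with rfl | rfl <;> rw [hx, hrefl] <;> ring

/-- for `q = 3` (`λ_3 = 1`), `Re s > 1/2`, `ε = ±1`, and `g`
bounded on `[-1,1]` satisfying, for every `x ∈ [-1,1]`,
`g(x) = Σ_{n≥3} ((x+n)²)^{-s} g(-1/(x+n)) + ε Σ_{n≥2} ((x-n)²)^{-s} g(1/(x-n))`,
then `g(x) = ε g(-x-1)` for every `x ∈ [-1, 0]`. -/
theorem stmt16 (s : ℂ) (hs : 1 / 2 < s.re) (ε : ℂ) (hε : ε = 1 ∨ ε = -1)
    (g : ℝ → ℂ) (hb : ∃ C : ℝ, ∀ x ∈ Set.Icc (-1 : ℝ) 1, ‖g x‖ ≤ C)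
    (heq : ∀ x ∈ Set.Icc (-1 : ℝ) 1,
      g x =
        (∑' n : ℕ, Complex.exp (-s * (Real.log ((x + ((n : ℝ) + 3)) ^ 2) : ℂ)) *
            g (-1 / (x + ((n : ℝ) + 3)))) +
        ε * ∑' n : ℕ, Complex.exp (-s * (Real.log ((x - ((n : ℝ) + 2)) ^ 2) : ℂ)) *
            g (1 / (x - ((n : ℝ) + 2)))) :
    ∀ x ∈ Set.Icc (-1 : ℝ) 0, g x = ε * g (-x - 1) :=
  stmt16_general s ε hε g heq
end

section
/- Let q = 3 (λ_3 = 1), let s ∈ ℂ with Re(s) > 1/2, let ε ∈ {+1, −1}, and let g : [−1, 1] → ℂ be a bounded function satisfying, for every x ∈ [−1, 1], g(x) = Σ_{n=3}^{∞} ((x+n)²)^{−s} g(−1/(x+n)) + ε · Σ_{n=2}^{∞} ((x−n)²)^{−s} g(1/(x−n)) (both series converge absolutely). Then g satisfies the shifted four-term (Lewis–Zagier type) functional equation: for every x ∈ [−1, 0], g(x) = g(x+1) + ((x+3)²)^{−s} g(−1/(x+3)) − ((x−1)²)^{−s} g(−x/(x−1)). -/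
/-!
Write `T₊(x) = Σ_{n≥3} ((x+n)²)^{-s} g(-1/(x+n))` and `T₋(x) = Σ_{n≥2} ((x-n)²)^{-s} g(1/(x-n))`,
so that `g = T₊ + ε T₋` on `[-1, 1]`. The substitution `x ↦ -1 - x` swaps the two series term by
term, which turns the equation into the reflection symmetry `g(-1-x) = ε g(x)` on `[-1, 0]`.
Both series converge absolutely (`Re s > 1/2`, `g` bounded), so comparing the equations at `x`
and `x + 1` they telescope: `T₊(x) - T₊(x+1)` is the `n = 3` term at `x` and `T₋(x+1) - T₋(x)` is
the `n = 2` term at `x + 1`, which involves `g(1/(x-1))`. The reflection symmetry at `1/(x-1) ∈ [-1, -1/2]` rewrites `ε g(1/(x-1))` as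
`g(-x/(x-1))`.
-/

open Set

namespace LewisZagier

noncomputable def slashFactor (s : ℂ) (u : ℝ) : ℂ :=
  Complex.exp (-s * (Real.log (u ^ 2) : ℂ))

section Terms

variable (s : ℂ) (g : ℝ → ℂ)

/-- The term of index `n + 3` of the series `Σ_{n≥3} ((x+n)²)^{-s} g(-1/(x+n))`. -/
noncomputable def plusTerm (x : ℝ) (n : ℕ) : ℂ :=
  slashFactor s (x + ((n : ℝ) + 3)) * g (-1 / (x + ((n : ℝ) + 3)))

/-- The term of index `n + 2` of the series `Σ_{n≥2} ((x-n)²)^{-s} g(1/(x-n))`. -/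
noncomputable def minusTerm (x : ℝ) (n : ℕ) : ℂ :=
  slashFactor s (x - ((n : ℝ) + 2)) * g (1 / (x - ((n : ℝ) + 2)))

def TransferEquationAt (ε : ℂ) (x : ℝ) : Prop :=
  g x = (∑' n, plusTerm s g x n) + ε * ∑' n, minusTerm s g x n

theorem plusTerm_neg_one_sub (x : ℝ) (n : ℕ) : plusTerm s g (-1 - x) n = minusTerm s g x n := by
  have h : -1 - x + ((n : ℝ) + 3) = -(x - ((n : ℝ) + 2)) := by ring
  rw [plusTerm, minusTerm, h, slashFactor, slashFactor, neg_sq, div_neg, neg_div, neg_neg]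

theorem minusTerm_neg_one_sub (x : ℝ) (n : ℕ) : minusTerm s g (-1 - x) n = plusTerm s g x n := by
  have h : -1 - x - ((n : ℝ) + 2) = -(x + ((n : ℝ) + 3)) := by ring
  rw [plusTerm, minusTerm, h, slashFactor, slashFactor, neg_sq, div_neg, neg_div]

theorem plusTerm_succ (x : ℝ) (n : ℕ) : plusTerm s g x (n + 1) = plusTerm s g (x + 1) n := by
  have h : x + (((n + 1 : ℕ) : ℝ) + 3) = x + 1 + ((n : ℝ) + 3) := by push_cast; ring
  rw [plusTerm, plusTerm, h]

theorem minusTerm_succ (x : ℝ) (n : ℕ) : minusTerm s g (x + 1) (n + 1) = minusTerm s g x n := by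
  have h : x + 1 - (((n + 1 : ℕ) : ℝ) + 2) = x - ((n : ℝ) + 2) := by push_cast; ring
  rw [minusTerm, minusTerm, h]

end Terms

theorem norm_slashFactor (s : ℂ) {u : ℝ} (hu : u ≠ 0) :
    ‖slashFactor s u‖ = |u| ^ (-(2 * s.re)) := by
  have hlog : Real.log (u ^ 2) = 2 * Real.log |u| := by
    rw [Real.log_abs, Real.log_pow, Nat.cast_ofNat]
  rw [slashFactor, Complex.norm_exp, Real.rpow_def_of_pos (abs_pos.mpr hu), hlog]
  simp only [Complex.mul_re, Complex.neg_re, Complex.ofReal_re, Complex.neg_im, Complex.ofReal_im,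
    mul_zero, sub_zero]
  ring_nf

theorem summable_slashFactor_mul {s : ℂ} (hs : 1 / 2 < s.re) {a : ℕ → ℝ}
    (ha : ∀ n : ℕ, (n : ℝ) + 1 ≤ |a n|) {h : ℕ → ℂ} {C : ℝ} (hC : ∀ n, ‖h n‖ ≤ C) :
    Summable fun n => slashFactor s (a n) * h n := by
  have hexp : -(2 * s.re) ≤ 0 := by linarith
  have hmajorant : Summable fun n : ℕ => ((n : ℝ) + 1) ^ (-(2 * s.re)) * C := by
    refine Summable.mul_right C ?_
    have := (summable_nat_add_iff 1).mpr (Real.summable_nat_rpow.mpr (by linarith : -(2 * s.re) < -1))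
    simpa only [Nat.cast_add, Nat.cast_one] using this
  refine Summable.of_norm_bounded hmajorant fun n => ?_
  have hpos : (0 : ℝ) < (n : ℝ) + 1 := by positivity
  rw [norm_mul, norm_slashFactor s (abs_pos.mp (hpos.trans_le (ha n)))]
  exact mul_le_mul (Real.rpow_le_rpow_of_nonpos hpos (ha n) hexp) (hC n) (norm_nonneg _)
    (by positivity)

theorem div_mem_Icc_neg_one_one {c u : ℝ} (hc : |c| = 1) (hu : 1 ≤ |u|) :
    c / u ∈ Icc (-1 : ℝ) 1 :=
  abs_le.mp (by rw [abs_div, hc]; exact div_le_one_of_le₀ hu (abs_nonneg _))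

section Summable

variable {s : ℂ} (hs : 1 / 2 < s.re) {g : ℝ → ℂ} {C : ℝ} (hC : ∀ y ∈ Icc (-1 : ℝ) 1, ‖g y‖ ≤ C)
include hs hC

theorem summable_plusTerm {x : ℝ} (hx : -1 ≤ x) : Summable (plusTerm s g x) := by
  have ha : ∀ n : ℕ, (n : ℝ) + 1 ≤ |x + ((n : ℝ) + 3)| := fun n => le_abs.mpr (.inl (by linarith))
  exact summable_slashFactor_mul hs ha fun n =>
    hC _ (div_mem_Icc_neg_one_one (by norm_num) ((le_add_of_nonneg_left n.cast_nonneg).trans (ha n)))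

theorem summable_minusTerm {x : ℝ} (hx : x ≤ 1) : Summable (minusTerm s g x) := by
  have ha : ∀ n : ℕ, (n : ℝ) + 1 ≤ |x - ((n : ℝ) + 2)| := fun n => le_abs.mpr (.inr (by linarith))
  exact summable_slashFactor_mul hs ha fun n =>
    hC _ (div_mem_Icc_neg_one_one abs_one ((le_add_of_nonneg_left n.cast_nonneg).trans (ha n)))

end Summable

namespace TransferEquationAt

variable {s ε : ℂ} {g : ℝ → ℂ} {x : ℝ}

theorem neg_one_sub (hx : TransferEquationAt s g ε x) (hx' : TransferEquationAt s g ε (-1 - x))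
    (hε : ε * ε = 1) : g (-1 - x) = ε * g x := by
  rw [hx', hx, tsum_congr (plusTerm_neg_one_sub s g x), tsum_congr (minusTerm_neg_one_sub s g x)]
  linear_combination (-∑' n, minusTerm s g x n) * hε

theorem sub_add_one (hx : TransferEquationAt s g ε x) (hx' : TransferEquationAt s g ε (x + 1))
    (hplus : Summable (plusTerm s g x)) (hminus : Summable (minusTerm s g (x + 1))) :
    g x = g (x + 1) + plusTerm s g x 0 - ε * minusTerm s g (x + 1) 0 := by
  rw [hx, hx', hplus.tsum_eq_zero_add, hminus.tsum_eq_zero_add, tsum_congr (plusTerm_succ s g x),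
    tsum_congr (minusTerm_succ s g x)]
  ring

end TransferEquationAt

end LewisZagier

open LewisZagier in
/-- for `q = 3` (`λ_3 = 1`), `Re s > 1/2`, `ε = ±1`, and `g`
bounded on `[-1,1]` satisfying, for every `x ∈ [-1,1]`,
`g(x) = Σ_{n≥3} ((x+n)²)^{-s} g(-1/(x+n)) + ε Σ_{n≥2} ((x-n)²)^{-s} g(1/(x-n))`,
then `g` satisfies the shifted four-term (Lewis–Zagier type) functional equation
`g(x) = g(x+1) + ((x+3)²)^{-s} g(-1/(x+3)) - ((x-1)²)^{-s} g(-x/(x-1))`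
for every `x ∈ [-1, 0]`. -/
theorem stmt17 (s : ℂ) (hs : 1 / 2 < s.re) (ε : ℂ) (hε : ε = 1 ∨ ε = -1)
    (g : ℝ → ℂ) (hb : ∃ C : ℝ, ∀ x ∈ Set.Icc (-1 : ℝ) 1, ‖g x‖ ≤ C)
    (heq : ∀ x ∈ Set.Icc (-1 : ℝ) 1,
      g x =
        (∑' n : ℕ, Complex.exp (-s * (Real.log ((x + ((n : ℝ) + 3)) ^ 2) : ℂ)) *
            g (-1 / (x + ((n : ℝ) + 3)))) +
        ε * ∑' n : ℕ, Complex.exp (-s * (Real.log ((x - ((n : ℝ) + 2)) ^ 2) : ℂ)) *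
            g (1 / (x - ((n : ℝ) + 2)))) :
    ∀ x ∈ Set.Icc (-1 : ℝ) 0,
      g x = g (x + 1) +
        Complex.exp (-s * (Real.log ((x + 3) ^ 2) : ℂ)) * g (-1 / (x + 3)) -
        Complex.exp (-s * (Real.log ((x - 1) ^ 2) : ℂ)) * g (-x / (x - 1)) := by
  rintro x ⟨hx₀, hx₁⟩
  obtain ⟨C, hC⟩ := hb
  have hT : ∀ y ∈ Icc (-1 : ℝ) 1, TransferEquationAt s g ε y := heq
  have hε2 : ε * ε = 1 := by rcases hε with rfl | rfl <;> norm_num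
  have hshift := (hT x ⟨hx₀, by linarith⟩).sub_add_one (hT (x + 1) ⟨by linarith, by linarith⟩)
    (summable_plusTerm hs hC hx₀) (summable_minusTerm hs hC (by linarith))
  have hx1 : x - 1 < 0 := by linarith
  have hy₀ : -1 ≤ 1 / (x - 1) := by rw [le_div_iff_of_neg hx1]; linarith
  have hy₁ : 1 / (x - 1) ≤ 0 := div_nonpos_of_nonneg_of_nonpos zero_le_one hx1.le
  have hreflect := (hT _ ⟨hy₀, by linarith⟩).neg_one_sub (hT _ ⟨by linarith, by linarith⟩) hε2
  have hy : -1 - 1 / (x - 1) = -x / (x - 1) := by field_simp [hx1.ne]; ring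
  rw [hy] at hreflect
  have hminus : minusTerm s g (x + 1) 0 = slashFactor s (x - 1) * g (1 / (x - 1)) := by
    rw [minusTerm, Nat.cast_zero, zero_add, show x + 1 - 2 = x - 1 by ring]
  rw [hshift, hminus, hreflect, plusTerm, Nat.cast_zero, zero_add, slashFactor, slashFactor]
  ring
end

section
/- Let q = 2h+2 with h ≥ 1 an integer, λ_q = 2 cos(π/q), f_q the Hurwitz–Nakada map, and θ_1(x) = −1/(x + λ_q). Then the f_q-orbit of −λ_q/2 is given by f_q^{i}(−λ_q/2) = θ_1^{∘(h−i)}(0) for every 0 ≤ i ≤ h; in particular f_q^{h−1}(−λ_q/2) = −1/λ_q and f_q^{h}(−λ_q/2) = 0. Moreover the orbit points are strictly increasing: −λ_q/2 = θ_1^{∘h}(0) < θ_1^{∘(h−1)}(0) < ⋯ < θ_1(0) = −1/λ_q < 0, so the orbit of −λ_q/2 under f_q consists of exactly h+1 distinct points. -/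
/-- The modified floor `⌊t⌋′`: the unique integer `n` with `n < t ≤ n+1` if
`t > 0`, and `n ≤ t < n+1` if `t ≤ 0`. -/
noncomputable def mfloor (t : ℝ) : ℤ := if 0 < t then ⌈t⌉ - 1 else ⌊t⌋

/-- The nearest-`λ_q`-multiple function `⟨x⟩ = ⌊x/λ_q + 1/2⌋′`. -/
noncomputable def nearLam (q : ℕ) (x : ℝ) : ℤ := mfloor (x / lam q + 1 / 2)

/-- The Hurwitz–Nakada map `f_q(x) = -1/x - ⟨-1/x⟩·λ_q`, `f_q(0) = 0`. -/
noncomputable def fq (q : ℕ) (x : ℝ) : ℝ :=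
  if x = 0 then 0 else -1 / x - (nearLam q (-1 / x) : ℝ) * lam q

open Real

lemma lam_pos {q : ℕ} (hq : 2 < q) : 0 < lam q := by
  have hq' : (2 : ℝ) < q := by exact_mod_cast hq
  have hpos : 0 < π / q := div_pos pi_pos (by linarith)
  exact mul_pos two_pos (cos_pos_of_mem_Ioo
    ⟨by linarith [pi_pos], div_lt_div_of_pos_left pi_pos two_pos hq'⟩)

lemma mfloor_eq_of_pos {t : ℝ} {n : ℤ} (ht : 0 < t) (hnt : n < t) (htn : t ≤ n + 1) :
    mfloor t = n := by
  rw [mfloor, if_pos ht, sub_eq_iff_eq_add, Int.ceil_eq_iff]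
  push_cast
  constructor <;> linarith

lemma nearLam_eq_one {q : ℕ} (hl : 0 < lam q) {x : ℝ} (hx : lam q / 2 < x)
    (hx' : x ≤ 3 * lam q / 2) : nearLam q x = 1 := by
  have hlow : 1 / 2 < x / lam q := by rw [lt_div_iff₀ hl]; linarith
  have hupp : x / lam q ≤ 3 / 2 := by rw [div_le_iff₀ hl]; linarith
  apply mfloor_eq_of_pos <;> push_cast <;> linarith

lemma fq_neg_inv_add_lam {q : ℕ} (hl : 0 < lam q) {y : ℝ} (hy : -lam q / 2 < y)
    (hy' : y ≤ lam q / 2) : fq q (-1 / (y + lam q)) = y := by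
  have hpos : 0 < y + lam q := by linarith
  have hinv : -1 / (-1 / (y + lam q)) = y + lam q := by field_simp
  rw [fq, if_neg (div_ne_zero (by norm_num) hpos.ne'), hinv,
    nearLam_eq_one hl (by linarith) (by linarith)]
  push_cast
  ring

lemma iterate_apply_eq_of_map_succ {α : Type*} {f : α → α} {a : ℕ → α} {n : ℕ}
    (hf : ∀ k < n, f (a (k + 1)) = a k) {i : ℕ} (hi : i ≤ n) : f^[i] (a n) = a (n - i) := by
  induction i with
  | zero => rfl
  | succ i ih =>
    rw [Function.iterate_succ_apply', ih (by omega), show n - i = n - (i + 1) + 1 by omega,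
      hf _ (by omega)]

lemma iterate_mem_range_of_isFixedPt {α : Type*} {f : α → α} {x : α} {n : ℕ}
    (hfix : Function.IsFixedPt f (f^[n] x)) (m : ℕ) :
    f^[m] x ∈ Set.range (fun i : Fin (n + 1) => f^[(i : ℕ)] x) := by
  by_cases hm : m ≤ n
  · exact ⟨⟨m, by omega⟩, rfl⟩
  · refine ⟨⟨n, by omega⟩, ?_⟩
    rw [show m = m - n + n by omega, Function.iterate_add_apply, hfix.iterate (m - n)]

lemma sin_sq_sub_sin_sub_mul_sin_add (x y : ℝ) :
    sin x ^ 2 - sin (x - y) * sin (x + y) = sin y ^ 2 := by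
  rw [sin_add, sin_sub]
  linear_combination (-sin x ^ 2) * sin_sq_add_cos_sq y + sin y ^ 2 * sin_sq_add_cos_sq x

section NegInvIterates

variable {θ : ℝ}

lemma iterate_neg_inv_add_two_cos_zero (hθ : 0 < θ) {n : ℕ} (hn : (n + 1) * θ < π) :
    (fun x => -1 / (x + 2 * cos θ))^[n] 0 = -sin (n * θ) / sin ((n + 1) * θ) := by
  induction n with
  | zero => simp
  | succ n ih =>
    push_cast at hn ⊢
    have hs₁ : 0 < sin ((n + 1) * θ) := sin_pos_of_pos_of_lt_pi (by positivity) (by nlinarith)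
    have hs₂ : 0 < sin ((n + 1 + 1) * θ) := sin_pos_of_pos_of_lt_pi (by positivity) hn
    have hrec := sin_add_add_sin_sub ((n + 1) * θ) θ
    rw [show (n + 1) * θ + θ = (n + 1 + 1) * θ by ring,
      show (n + 1) * θ - θ = n * θ by ring] at hrec
    have hden : -sin (n * θ) / sin ((n + 1) * θ) + 2 * cos θ
        = sin ((n + 1 + 1) * θ) / sin ((n + 1) * θ) := by
      rw [eq_div_iff hs₁.ne', add_mul, div_mul_cancel₀ _ hs₁.ne']
      linarith
    rw [Function.iterate_succ_apply', ih (by nlinarith), hden]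
    field_simp

lemma strictAntiOn_iterate_neg_inv_add_two_cos_zero (hθ : 0 < θ) {n : ℕ}
    (hn : (n + 1) * θ < π) :
    StrictAntiOn (fun k => (fun x => -1 / (x + 2 * cos θ))^[k] 0) (Set.Iic n) := by
  apply strictAntiOn_Iic_of_succ_lt
  intro k hk
  have hk' : ((k : ℝ) + 1 + 1) * θ ≤ (n + 1) * θ := by
    gcongr
    exact_mod_cast hk
  have hs₁ : 0 < sin ((k + 1) * θ) := sin_pos_of_pos_of_lt_pi (by positivity) (by nlinarith)
  have hs₂ : 0 < sin ((k + 1 + 1) * θ) := sin_pos_of_pos_of_lt_pi (by positivity) (by linarith)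
  have hcassini := sin_sq_sub_sin_sub_mul_sin_add ((k + 1) * θ) θ
  rw [show (k + 1) * θ + θ = (k + 1 + 1) * θ by ring,
    show (k + 1) * θ - θ = k * θ by ring] at hcassini
  simp only [Order.succ_eq_add_one]
  rw [iterate_neg_inv_add_two_cos_zero hθ (by push_cast; linarith),
    iterate_neg_inv_add_two_cos_zero hθ (by linarith), neg_div, neg_div, neg_lt_neg_iff]
  push_cast
  rw [div_lt_div_iff₀ hs₁ hs₂]
  nlinarith [sin_pos_of_pos_of_lt_pi hθ (by nlinarith)]

lemma iterate_neg_inv_add_two_cos_zero_of_succ_mul_eq (hθ : 0 < θ) {n : ℕ}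
    (hn : (n + 1) * θ = π / 2) : (fun x => -1 / (x + 2 * cos θ))^[n] 0 = -cos θ := by
  rw [iterate_neg_inv_add_two_cos_zero hθ (by linarith [pi_pos]), hn,
    show n * θ = π / 2 - θ by linarith, sin_pi_div_two_sub, sin_pi_div_two, div_one]

end NegInvIterates

/-- for even `q = 2h+2` with `h ≥ 1`, the `f_q`-orbit of `-λ_q/2`
satisfies `f_q^i(-λ_q/2) = θ_1^{∘(h-i)}(0)` for `0 ≤ i ≤ h` (where
`θ_1(x) = -1/(x+λ_q)`); in particular `f_q^{h-1}(-λ_q/2) = -1/λ_q` and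
`f_q^h(-λ_q/2) = 0`. Moreover
`-λ_q/2 = θ_1^{∘h}(0) < θ_1^{∘(h-1)}(0) < ⋯ < θ_1(0) = -1/λ_q < 0`,
so the orbit consists of exactly `h+1` distinct points. -/
theorem stmt18 (h q : ℕ) (hh : 1 ≤ h) (hq : q = 2 * h + 2) :
    let t1 : ℝ → ℝ := fun x => -1 / (x + lam q)
    (∀ i ≤ h, (fq q)^[i] (-(lam q) / 2) = t1^[h - i] 0) ∧
    (fq q)^[h - 1] (-(lam q) / 2) = -1 / lam q ∧
    (fq q)^[h] (-(lam q) / 2) = 0 ∧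
    t1^[h] 0 = -(lam q) / 2 ∧ t1 0 = -1 / lam q ∧ t1 0 < 0 ∧
    (∀ i j : ℕ, i < j → j ≤ h → t1^[j] 0 < t1^[i] 0) ∧
    Function.Injective (fun i : Fin (h + 1) => (fq q)^[(i : ℕ)] (-(lam q) / 2)) ∧
    (∀ n : ℕ, (fq q)^[n] (-(lam q) / 2) ∈
      Set.range (fun i : Fin (h + 1) => (fq q)^[(i : ℕ)] (-(lam q) / 2))) := by
  intro t1
  have hθ : 0 < π / q := by rw [hq]; positivity
  have hhθ : ((h : ℝ) + 1) * (π / q) = π / 2 := by rw [hq]; push_cast; field_simp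
  have hlam : 0 < lam q := lam_pos (by omega)
  have anti : StrictAntiOn (fun k => t1^[k] 0) (Set.Iic h) :=
    strictAntiOn_iterate_neg_inv_add_two_cos_zero hθ (by linarith [pi_pos])
  have last : t1^[h] 0 = -(lam q) / 2 := by
    rw [show -(lam q) / 2 = -cos (π / q) by rw [lam]; ring]
    exact iterate_neg_inv_add_two_cos_zero_of_succ_mul_eq hθ hhθ
  have orbit : ∀ i ≤ h, (fq q)^[i] (-(lam q) / 2) = t1^[h - i] 0 := by
    rw [← last]
    refine fun i hi => iterate_apply_eq_of_map_succ (a := fun k => t1^[k] 0) (fun k hk => ?_) hi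
    have hlow : t1^[h] 0 < t1^[k] 0 := anti (Set.mem_Iic.2 hk.le) (Set.mem_Iic.2 le_rfl) hk
    have hupp : t1^[k] 0 ≤ 0 :=
      anti.antitoneOn (Set.mem_Iic.2 h.zero_le) (Set.mem_Iic.2 hk.le) k.zero_le
    rw [Function.iterate_succ_apply']
    exact fq_neg_inv_add_lam hlam (last ▸ hlow) (by linarith)
  have hzero : (fq q)^[h] (-(lam q) / 2) = 0 := by simpa using orbit h le_rfl
  refine ⟨orbit, ?_, hzero, last, ?_, ?_,
    fun i j hij hj => anti (Set.mem_Iic.2 (by omega)) hj hij, ?_, ?_⟩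
  · rw [orbit (h - 1) (by omega), show h - (h - 1) = 1 by omega]
    simp [t1]
  · simp [t1]
  · exact div_neg_of_neg_of_pos (by norm_num) (by simpa [t1] using hlam)
  · intro i j hij
    simp only [orbit i (Nat.lt_succ_iff.1 i.isLt), orbit j (Nat.lt_succ_iff.1 j.isLt)] at hij
    have := anti.injOn (by simp) (by simp) hij
    omega
  · exact iterate_mem_range_of_isFixedPt (by rw [hzero]; simp [Function.IsFixedPt, fq])
end
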